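/- arXiv:1210.1116 — 9 statements merged into one kernel-verified Lean document; each statement's English description precedes it below -/
import Mathlib

section
/- Let P and P̃ be skip-free stochastic matrices on E_k = {0,...,k} such that p̃_{i,·} ⪯_st p_{i,·} for every i = 0,...,k-1, and let π, π̃ be initial probability vectors on E_k with π̃ ⪯_st π. Then for every level h = 1,...,k one has T_h ⪯_st T̃_h, i.e. for every n ∈ ℕ, ∑_{0≤i,j≤h-1} π_i (Q_h^n)_{i,j} ≤ ∑_{0≤i,j≤h-1} π̃_i (Q̃_h^n)_{i,j}, where Q_h, Q̃_h are the submatrices of P, P̃ on the states {0,...,h-1}. -/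
open Finset Matrix

/-- Usual stochastic order between two vectors on `Fin m`. -/
def stDom {m : ℕ} (μ ν : Fin m → ℝ) : Prop :=
  ∀ j : Fin m, ∑ l ∈ Finset.univ.filter (fun l => j ≤ l), μ l ≤
    ∑ l ∈ Finset.univ.filter (fun l => j ≤ l), ν l

/-- A (row-)stochastic matrix. -/
def IsStochastic {m : ℕ} (P : Matrix (Fin m) (Fin m) ℝ) : Prop :=
  (∀ i j, 0 ≤ P i j) ∧ ∀ i, ∑ j, P i j = 1

/-- A probability vector. -/
def IsProbVec {m : ℕ} (π : Fin m → ℝ) : Prop :=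
  (∀ i, 0 ≤ π i) ∧ ∑ i, π i = 1

/-- Skip-free (on the right): `p_{i,j} = 0` whenever `j > i+1`. -/
def SkipFree {m : ℕ} (P : Matrix (Fin m) (Fin m) ℝ) : Prop :=
  ∀ i j : Fin m, (i : ℕ) + 1 < (j : ℕ) → P i j = 0

/-- The survival function `P(T_h > n) = ∑_{0 ≤ i,j ≤ h-1} π_i (Q_h^n)_{i,j}`,
where `Q_h` is the leading `h × h` submatrix of `P`. -/
noncomputable def hitSurvival {k : ℕ} (P : Matrix (Fin (k + 1)) (Fin (k + 1)) ℝ)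
    (π : Fin (k + 1) → ℝ) (h : ℕ) (hh : h ≤ k) (n : ℕ) : ℝ :=
  ∑ i : Fin h, ∑ j : Fin h,
    π (Fin.castLE (hh.trans k.le_succ) i) *
      ((P.submatrix (Fin.castLE (hh.trans k.le_succ)) (Fin.castLE (hh.trans k.le_succ))) ^ n) i j

/-!
Let `u_n(i) = P_i(T_h > n)`, extended by `0` for `i ≥ h`, so that `u_{n+1}(i) = ∑_j p_{i,j} u_n(j)`
for `i < h`. For a skip-free chain `ũ_n` is antitone in the starting state: the chain cannot jump
over a state, so from `i` it reaches `i + 1` (or stays lower) and survives at least as long as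
from `i + 1`. Antitone functions are integrated in the reverse order by stochastically ordered
laws, so `∑_j p_{i,j} ũ_n(j) ≤ ∑_j p̃_{i,j} ũ_n(j)`, and induction on `n` gives `u_n ≤ ũ_n`.
The same argument applied to the initial laws concludes.
-/

section StochasticOrder

variable {m : ℕ}

theorem stDom_comp_succ {μ ν : Fin (m + 1) → ℝ} (hdom : stDom μ ν) :
    stDom (μ ∘ Fin.succ) (ν ∘ Fin.succ) := by
  intro j
  simpa [Finset.sum_filter, Fin.sum_univ_succ] using hdom j.succ

theorem sum_mul_le_sum_mul_of_stDom_of_nonpos {μ ν G : Fin m → ℝ} (hdom : stDom μ ν)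
    (hG : Antitone G) (hG0 : ∀ j, G j ≤ 0) :
    ∑ j, ν j * G j ≤ ∑ j, μ j * G j := by
  induction m with
  | zero => simp
  | succ m ih =>
    have split_first : ∀ ρ : Fin (m + 1) → ℝ, ∑ j, ρ j * G j =
        G 0 * ∑ j, ρ j + ∑ j : Fin m, ρ j.succ * (G j.succ - G 0) := by
      intro ρ
      simp only [Fin.sum_univ_succ, mul_sub, sum_sub_distrib, ← sum_mul]
      ring
    have htotal : ∑ j, μ j ≤ ∑ j, ν j := by simpa using hdom 0
    have hfirst := mul_le_mul_of_nonpos_left htotal (hG0 0)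
    have hrest := ih (stDom_comp_succ hdom) (G := fun j => G j.succ - G 0)
      (fun i j hij => sub_le_sub_right (hG (Fin.succ_le_succ_iff.2 hij)) _)
      (fun j => sub_nonpos.2 (hG (Fin.zero_le _)))
    rw [split_first μ, split_first ν]
    exact add_le_add hfirst hrest

theorem sum_mul_le_sum_mul_of_stDom {μ ν G : Fin m → ℝ} (hdom : stDom μ ν)
    (htot : ∑ j, μ j = ∑ j, ν j) (hG : Antitone G) :
    ∑ j, ν j * G j ≤ ∑ j, μ j * G j := by
  obtain _ | m := m
  · simp
  have := sum_mul_le_sum_mul_of_stDom_of_nonpos hdom (G := fun j => G j - G 0)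
    (fun i j hij => sub_le_sub_right (hG hij) _) (fun j => sub_nonpos.2 (hG (Fin.zero_le _)))
  simp only [mul_sub, sum_sub_distrib, ← sum_mul, htot] at this
  linarith

end StochasticOrder

theorem Fin.sum_castLE_eq_sum_of_eq_zero {M : Type*} [AddCommMonoid M] {h m : ℕ} (hh : h ≤ m)
    (f : Fin m → M) (hf : ∀ j : Fin m, h ≤ j → f j = 0) :
    ∑ j : Fin h, f (Fin.castLE hh j) = ∑ j, f j :=
  Fintype.sum_of_injective _ (Fin.castLE_injective hh) _ _
    (by simpa [Fin.range_castLE] using hf) fun _ => rfl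

section Survival

variable {m : ℕ}

/-- `survivalBelow P h n i = P_i(T_h > n)` for `i < h`, and `0` for `i ≥ h`. -/
def survivalBelow (P : Matrix (Fin m) (Fin m) ℝ) (h : ℕ) : ℕ → Fin m → ℝ
  | 0, i => if (i : ℕ) < h then 1 else 0
  | n + 1, i => if (i : ℕ) < h then ∑ j, P i j * survivalBelow P h n j else 0

variable {P Pt : Matrix (Fin m) (Fin m) ℝ} {h : ℕ}

theorem survivalBelow_eq_zero_of_le {n : ℕ} {i : Fin m} (hi : h ≤ i) :
    survivalBelow P h n i = 0 := by
  cases n <;> simp [survivalBelow, not_lt.2 hi]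

theorem survivalBelow_succ_of_lt {n : ℕ} {i : Fin m} (hi : (i : ℕ) < h) :
    survivalBelow P h (n + 1) i = ∑ j, P i j * survivalBelow P h n j :=
  if_pos hi

theorem survivalBelow_nonneg (hP : ∀ i j, 0 ≤ P i j) (n : ℕ) (i : Fin m) :
    0 ≤ survivalBelow P h n i := by
  induction n generalizing i with
  | zero => unfold survivalBelow; split <;> norm_num
  | succ n ih =>
    unfold survivalBelow
    split
    · exact sum_nonneg fun j _ => mul_nonneg (hP i j) (ih j)
    · rfl

theorem survivalBelow_succ_le (hP : IsStochastic P) (n : ℕ) (i : Fin m) :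
    survivalBelow P h (n + 1) i ≤ survivalBelow P h n i := by
  by_cases hi : (i : ℕ) < h
  swap
  · rw [survivalBelow_eq_zero_of_le (not_lt.1 hi), survivalBelow_eq_zero_of_le (not_lt.1 hi)]
  induction n generalizing i with
  | zero =>
    rw [survivalBelow_succ_of_lt hi]
    calc ∑ j, P i j * survivalBelow P h 0 j ≤ ∑ j, P i j * 1 := by
          gcongr with j
          · exact hP.1 i j
          · unfold survivalBelow; split <;> norm_num
      _ = survivalBelow P h 0 i := by simp [hP.2, survivalBelow, hi]
  | succ n ih =>
    rw [survivalBelow_succ_of_lt hi, survivalBelow_succ_of_lt hi]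
    gcongr with j
    · exact hP.1 i j
    · by_cases hj : (j : ℕ) < h
      · exact ih j hj
      · rw [survivalBelow_eq_zero_of_le (not_lt.1 hj), survivalBelow_eq_zero_of_le (not_lt.1 hj)]

theorem survivalBelow_antitone (hP : IsStochastic P) (hsf : SkipFree P) (n : ℕ) :
    Antitone (survivalBelow P h n) := by
  obtain _ | m := m
  · exact fun i => i.elim0
  induction n with
  | zero =>
    intro i j hij
    simp only [survivalBelow]
    have : (i : ℕ) ≤ j := hij
    split_ifs <;> first | omega | norm_num
  | succ n ih =>
    refine Fin.antitone_iff_succ_le.2 fun i => ?_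
    by_cases hi : (i.succ : ℕ) < h
    swap
    · rw [survivalBelow_eq_zero_of_le (not_lt.1 hi)]
      exact survivalBelow_nonneg hP.1 _ _
    have hi' : (i.castSucc : ℕ) < h := by simp only [Fin.val_succ, Fin.val_castSucc] at *; omega
    calc survivalBelow P h (n + 1) i.succ ≤ survivalBelow P h n i.succ :=
          survivalBelow_succ_le hP n _
      _ = ∑ j, P i.castSucc j * survivalBelow P h n i.succ := by
          rw [← sum_mul, hP.2, one_mul]
      _ ≤ ∑ j, P i.castSucc j * survivalBelow P h n j := by
          refine sum_le_sum fun j _ => ?_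
          rcases le_or_gt j i.succ with hj | hj
          · exact mul_le_mul_of_nonneg_left (ih hj) (hP.1 _ _)
          · rw [hsf _ _ (by simpa [Fin.lt_def] using hj), zero_mul, zero_mul]
      _ = survivalBelow P h (n + 1) i.castSucc := (survivalBelow_succ_of_lt hi').symm

theorem survivalBelow_le_survivalBelow_of_stDom (hP : IsStochastic P) (hPt : IsStochastic Pt)
    (hsfPt : SkipFree Pt) (hrow : ∀ i : Fin m, (i : ℕ) < h → stDom (Pt i) (P i))
    (n : ℕ) (i : Fin m) :
    survivalBelow P h n i ≤ survivalBelow Pt h n i := by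
  induction n generalizing i with
  | zero => rfl
  | succ n ih =>
    by_cases hi : (i : ℕ) < h
    swap
    · rw [survivalBelow_eq_zero_of_le (not_lt.1 hi), survivalBelow_eq_zero_of_le (not_lt.1 hi)]
    rw [survivalBelow_succ_of_lt hi, survivalBelow_succ_of_lt hi]
    calc ∑ j, P i j * survivalBelow P h n j ≤ ∑ j, P i j * survivalBelow Pt h n j :=
          sum_le_sum fun j _ => mul_le_mul_of_nonneg_left (ih j) (hP.1 i j)
      _ ≤ ∑ j, Pt i j * survivalBelow Pt h n j :=
          sum_mul_le_sum_mul_of_stDom (hrow i hi) (by rw [hPt.2, hP.2])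
            (survivalBelow_antitone hPt hsfPt n)

theorem sum_submatrix_castLE_pow_apply (hh : h ≤ m) (n : ℕ) (i : Fin h) :
    ∑ j, ((P.submatrix (Fin.castLE hh) (Fin.castLE hh)) ^ n) i j =
      survivalBelow P h n (Fin.castLE hh i) := by
  induction n generalizing i with
  | zero => simp [one_apply, survivalBelow]
  | succ n ih =>
    simp only [pow_succ', mul_apply, submatrix_apply]
    rw [sum_comm]
    simp only [← mul_sum, ih]
    rw [survivalBelow_succ_of_lt (by simp)]
    exact Fin.sum_castLE_eq_sum_of_eq_zero hh (fun j => P _ j * survivalBelow P h n j)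
      fun j hj => by rw [survivalBelow_eq_zero_of_le hj, mul_zero]

end Survival

theorem hitSurvival_eq_sum_survivalBelow {k : ℕ} (P : Matrix (Fin (k + 1)) (Fin (k + 1)) ℝ)
    (π : Fin (k + 1) → ℝ) {h : ℕ} (hh : h ≤ k) (n : ℕ) :
    hitSurvival P π h hh n = ∑ i, π i * survivalBelow P h n i := by
  simp only [hitSurvival, ← mul_sum, sum_submatrix_castLE_pow_apply]
  exact Fin.sum_castLE_eq_sum_of_eq_zero _ (fun i => π i * survivalBelow P h n i) fun i hi => by
    rw [survivalBelow_eq_zero_of_le hi, mul_zero]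

theorem hitting_times_st_order_of_rowwise_domination_general
    (k : ℕ) (P Pt : Matrix (Fin (k + 1)) (Fin (k + 1)) ℝ)
    (hP : IsStochastic P) (hPt : IsStochastic Pt)
    (hsfPt : SkipFree Pt)
    (π πt : Fin (k + 1) → ℝ) (hπ : IsProbVec π) (hπt : IsProbVec πt)
    (hinit : stDom πt π)
    (hrow : ∀ i : Fin (k + 1), (i : ℕ) < k → stDom (Pt i) (P i)) :
    ∀ h : ℕ, 1 ≤ h → ∀ (h2 : h ≤ k), ∀ n : ℕ,
      hitSurvival P π h h2 n ≤ hitSurvival Pt πt h h2 n := by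
  intro h _ h2 n
  rw [hitSurvival_eq_sum_survivalBelow, hitSurvival_eq_sum_survivalBelow]
  calc ∑ i, π i * survivalBelow P h n i ≤ ∑ i, π i * survivalBelow Pt h n i :=
        sum_le_sum fun i _ => mul_le_mul_of_nonneg_left
          (survivalBelow_le_survivalBelow_of_stDom hP hPt hsfPt
            (fun i hi => hrow i (hi.trans_le h2)) n i) (hπ.1 i)
    _ ≤ ∑ i, πt i * survivalBelow Pt h n i :=
        sum_mul_le_sum_mul_of_stDom hinit (by rw [hπt.2, hπ.2])
          (survivalBelow_antitone hPt hsfPt n)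

/-- Theorem (Irle–Gani type): if the rows of `P̃` are stochastically dominated
by the corresponding rows of `P` for all states `i < k`, and the initial laws
satisfy `π̃ ⪯_st π`, then `T_h ⪯_st T̃_h` for every level `h = 1, …, k`. -/
theorem hitting_times_st_order_of_rowwise_domination
    (k : ℕ) (P Pt : Matrix (Fin (k + 1)) (Fin (k + 1)) ℝ)
    (hP : IsStochastic P) (hPt : IsStochastic Pt)
    (hsfP : SkipFree P) (hsfPt : SkipFree Pt)
    (π πt : Fin (k + 1) → ℝ) (hπ : IsProbVec π) (hπt : IsProbVec πt)
    (hinit : stDom πt π)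
    (hrow : ∀ i : Fin (k + 1), (i : ℕ) < k → stDom (Pt i) (P i)) :
    ∀ h : ℕ, 1 ≤ h → ∀ (h2 : h ≤ k), ∀ n : ℕ,
      hitSurvival P π h h2 n ≤ hitSurvival Pt πt h h2 n :=
  hitting_times_st_order_of_rowwise_domination_general k P Pt hP hPt hsfPt π πt hπ hπt hinit hrow
end

section
/- Let A and A' be stochastic matrices on E_k = {0,...,k}. Then A ⊴ A' holds if and only if for every pair of states i ≤ i' in E_k there exists a probability distribution γ on E_k × E_k whose first marginal equals the row a_{i,·} of A, whose second marginal equals the row a'_{i',·} of A', and which is supported on the set {(y,y') ∈ E_k × E_k : y ≤ y'} (i.e. γ(y,y') = 0 whenever y > y'). -/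
open Finset Matrix

/-- The relation `A' ⊴ A`. -/
def tri {m : ℕ} (A' A : Matrix (Fin m) (Fin m) ℝ) : Prop :=
  ∀ i j : Fin m, i ≤ j → stDom (A' i) (A j)

/-!
If `μ ⪯_st ν` have the same total mass, their cumulative sums satisfy `G ≤ F` (`F` for `μ`,
`G` for `ν`). Splitting `[0, F m] = [0, G m]` once into the intervals `[F y, F (y+1)]` and once
into the intervals `[G y', G (y'+1)]`, the quantile coupling gives `(y, y')` the length of
`[F y, F (y+1)] ∩ [G y', G (y'+1)]`: its marginals telescope to `μ` and `ν`, and for `y' < y`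
the two intervals are separated by `G (y'+1) ≤ G y ≤ F y`. Conversely, a coupling supported on
`y ≤ y'` moves the mass of `μ` on `{l ≥ j}` into `{l ≥ j}`.
-/

/-- Length of `[a, b] ∩ [c, d]`. -/
def intervalOverlap (a b c d : ℝ) : ℝ :=
  max 0 (min b d - max a c)

lemma intervalOverlap_comm (a b c d : ℝ) : intervalOverlap a b c d = intervalOverlap c d a b := by
  rw [intervalOverlap, intervalOverlap, min_comm, max_comm a]

lemma intervalOverlap_eq_zero_of_le {a b c d : ℝ} (h : d ≤ a) : intervalOverlap a b c d = 0 :=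
  max_eq_left <| sub_nonpos.2 <| (min_le_right b d).trans <| h.trans (le_max_left a c)

lemma intervalOverlap_eq_sub {a b c d : ℝ} (hab : a ≤ b) (hcd : c ≤ d) :
    intervalOverlap a b c d = min b (max a d) - min b (max a c) := by
  unfold intervalOverlap
  rcases le_total a c <;> rcases le_total a d <;> rcases le_total b c <;>
    rcases le_total b d <;> simp only [min_def, max_def] <;> split_ifs <;> linarith

lemma sum_range_intervalOverlap {G : ℕ → ℝ} (hG : Monotone G) {a b : ℝ} {n : ℕ} (hab : a ≤ b)
    (ha : G 0 ≤ a) (hb : b ≤ G n) :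
    ∑ j ∈ range n, intervalOverlap a b (G j) (G (j + 1)) = b - a := by
  rw [sum_congr rfl fun j _ => intervalOverlap_eq_sub hab (hG j.le_succ),
    sum_range_sub (fun j => min b (max a (G j))), max_eq_right (hab.trans hb), min_eq_left hb,
    max_eq_left ha, min_eq_right hab]

section Cdf

variable {m : ℕ} (μ : Fin m → ℝ)

def cdf (n : ℕ) : ℝ :=
  ∑ l ∈ univ.filter (fun l : Fin m => (l : ℕ) < n), μ l

lemma cdf_zero : cdf μ 0 = 0 := by
  simp [cdf]

lemma cdf_of_le {n : ℕ} (hn : m ≤ n) : cdf μ n = ∑ l, μ l := by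
  rw [cdf, filter_true_of_mem fun l _ => l.isLt.trans_le hn]

lemma cdf_succ (y : Fin m) : cdf μ (y + 1) = cdf μ y + μ y := by
  have h : univ.filter (fun l : Fin m => (l : ℕ) < y + 1) =
      insert y (univ.filter fun l : Fin m => (l : ℕ) < y) := by
    ext l
    simp [Fin.ext_iff, le_iff_lt_or_eq, or_comm]
  rw [cdf, h, sum_insert (by simp), add_comm, cdf]

lemma cdf_monotone (hμ : ∀ l, 0 ≤ μ l) : Monotone (cdf μ) := fun _ _ hmn =>
  sum_le_sum_of_subset_of_nonneg (fun l => by simp only [mem_filter, mem_univ, true_and]; omega)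
    fun l _ _ => hμ l

lemma sum_filter_le_eq_sub_cdf (j : Fin m) :
    ∑ l ∈ univ.filter (fun l => j ≤ l), μ l = ∑ l, μ l - cdf μ j := by
  rw [cdf, ← sum_filter_add_sum_filter_not univ (fun l : Fin m => (l : ℕ) < j)]
  simp only [not_lt, Fin.le_def, add_sub_cancel_left]

variable {μ} {ν : Fin m → ℝ}

lemma cdf_le_cdf_of_stDom (hdom : stDom μ ν) (hsum : ∑ l, μ l = ∑ l, ν l) (n : ℕ) :
    cdf ν n ≤ cdf μ n := by
  by_cases hn : n < m
  · have h := hdom ⟨n, hn⟩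
    rw [sum_filter_le_eq_sub_cdf, sum_filter_le_eq_sub_cdf, hsum] at h
    linarith
  · rw [cdf_of_le μ (not_lt.1 hn), cdf_of_le ν (not_lt.1 hn), hsum]

end Cdf

section Coupling

variable {m : ℕ}

def IsOrderedCoupling (γ : Fin m → Fin m → ℝ) (μ ν : Fin m → ℝ) : Prop :=
  (∀ y y', 0 ≤ γ y y') ∧ (∀ y, ∑ y', γ y y' = μ y) ∧ (∀ y', ∑ y, γ y y' = ν y') ∧
    ∀ y y' : Fin m, y' < y → γ y y' = 0

lemma exists_isOrderedCoupling_of_stDom {μ ν : Fin m → ℝ} (hμ : ∀ l, 0 ≤ μ l)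
    (hν : ∀ l, 0 ≤ ν l) (hsum : ∑ l, μ l = ∑ l, ν l) (hdom : stDom μ ν) :
    ∃ γ, IsOrderedCoupling γ μ ν := by
  have hF : Monotone (cdf μ) := cdf_monotone μ hμ
  have hG : Monotone (cdf ν) := cdf_monotone ν hν
  have h0 : cdf μ 0 = cdf ν 0 := by rw [cdf_zero, cdf_zero]
  have hm : cdf μ m = cdf ν m := by rw [cdf_of_le μ le_rfl, cdf_of_le ν le_rfl, hsum]
  refine ⟨fun y y' => intervalOverlap (cdf μ y) (cdf μ (y + 1)) (cdf ν y') (cdf ν (y' + 1)),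
    fun _ _ => le_max_left _ _, fun y => ?_, fun y' => ?_, fun y y' hlt => ?_⟩
  · rw [Fin.sum_univ_eq_sum_range (fun j => intervalOverlap _ _ (cdf ν j) (cdf ν (j + 1))),
      sum_range_intervalOverlap hG (hF (Nat.le_succ _)) (h0 ▸ hF (Nat.zero_le _))
        (hm ▸ hF y.isLt), cdf_succ, add_sub_cancel_left]
  · simp_rw [intervalOverlap_comm (cdf μ _)]
    rw [Fin.sum_univ_eq_sum_range (fun j => intervalOverlap _ _ (cdf μ j) (cdf μ (j + 1))),
      sum_range_intervalOverlap hF (hG (Nat.le_succ _)) (h0.symm ▸ hG (Nat.zero_le _))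
        (hm.symm ▸ hG y'.isLt), cdf_succ, add_sub_cancel_left]
  · exact intervalOverlap_eq_zero_of_le <| (hG (Nat.succ_le_of_lt hlt)).trans <|
      cdf_le_cdf_of_stDom hdom hsum y

lemma stDom_of_isOrderedCoupling {γ : Fin m → Fin m → ℝ} {μ ν : Fin m → ℝ}
    (hγ : IsOrderedCoupling γ μ ν) : stDom μ ν := by
  obtain ⟨hpos, hrow, hcol, hsupp⟩ := hγ
  intro j
  calc ∑ l ∈ univ.filter (j ≤ ·), μ l
      = ∑ l ∈ univ.filter (j ≤ ·), ∑ y' ∈ univ.filter (j ≤ ·), γ l y' := by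
        refine sum_congr rfl fun l hl => ?_
        rw [← hrow l, sum_filter_of_ne fun y' _ hne => ?_]
        by_contra hy'
        exact hne (hsupp l y' ((not_le.1 hy').trans_le (mem_filter.1 hl).2))
    _ ≤ ∑ l, ∑ y' ∈ univ.filter (j ≤ ·), γ l y' :=
        sum_le_sum_of_subset_of_nonneg (filter_subset _ _)
          fun l _ _ => sum_nonneg fun y' _ => hpos l y'
    _ = ∑ y' ∈ univ.filter (j ≤ ·), ν y' := by
        rw [sum_comm]
        exact sum_congr rfl fun y' _ => hcol y'

lemma stDom_iff_exists_isOrderedCoupling {μ ν : Fin m → ℝ} (hμ : ∀ l, 0 ≤ μ l)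
    (hν : ∀ l, 0 ≤ ν l) (hsum : ∑ l, μ l = ∑ l, ν l) :
    stDom μ ν ↔ ∃ γ, IsOrderedCoupling γ μ ν :=
  ⟨exists_isOrderedCoupling_of_stDom hμ hν hsum, fun ⟨_, hγ⟩ => stDom_of_isOrderedCoupling hγ⟩

end Coupling

/-- Lemma 1 (De Santis–Spizzichino): `A ⊴ A'` holds iff for all states
`i ≤ i'` there is a coupling `γ` of the rows `a_{i,·}` and `a'_{i',·}`
supported on `{(y,y') : y ≤ y'}`. -/
theorem tri_iff_coupling
    (k : ℕ) (A A' : Matrix (Fin (k + 1)) (Fin (k + 1)) ℝ)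
    (hA : IsStochastic A) (hA' : IsStochastic A') :
    tri A A' ↔
      ∀ i i' : Fin (k + 1), i ≤ i' →
        ∃ γ : Fin (k + 1) → Fin (k + 1) → ℝ,
          (∀ y y', 0 ≤ γ y y') ∧
          (∀ y, ∑ y', γ y y' = A i y) ∧
          (∀ y', ∑ y, γ y y' = A' i' y') ∧
          (∀ y y' : Fin (k + 1), y' < y → γ y y' = 0) :=
  forall₂_congr fun i i' => imp_congr_right fun _ =>
    stDom_iff_exists_isOrderedCoupling (hA.1 i) (hA'.1 i') (by rw [hA.2, hA'.2])
end

section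
/- If A, A', B, B' are stochastic matrices on E_k = {0,...,k} such that A ⊴ A' and B ⊴ B', then the products satisfy AB ⊴ A'B'. -/
/-!
The tail sums of row `i` of `A * B` are `∑ₙ A i n * F n`, where `F n` is the corresponding tail
sum of row `n` of `B`; likewise for `A' * B'` with `F'`. Since `B ⊴ B'`, `F n ≤ F' n'` whenever
`n ≤ n'`, so a monotone `H` fits between them. Stochastic dominance of the rows of `A` by those of
`A'` with equal total mass means exactly that monotone functions have larger `A'`-averages,
which gives `∑ A i n F n ≤ ∑ A i n H n ≤ ∑ A' j n H n ≤ ∑ A' j n F' n`.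
-/

open Finset Matrix

/-- Abel summation: splitting off the least element `a` of `s` writes `∑ d g` as
`g a * ∑ d + ∑ d (g - g a)`, and `g - g a` again satisfies the hypotheses on the rest of `s`. -/
theorem Finset.sum_mul_nonneg_of_tail_sum_nonneg {α : Type*} [LinearOrder α] (s : Finset α)
    (d g : α → ℝ) (hd : ∀ j ∈ s, 0 ≤ ∑ l ∈ s with j ≤ l, d l) (hg : MonotoneOn g s)
    (hg₀ : ∀ x ∈ s, 0 ≤ g x) : 0 ≤ ∑ l ∈ s, d l * g l := by
  classical
  induction s using Finset.induction_on_min generalizing g with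
  | empty => simp
  | insert a s ha ih =>
    have has : a ∉ s := fun h => lt_irrefl a (ha a h)
    have htail : ∀ j ∈ s, ∑ l ∈ insert a s with j ≤ l, d l = ∑ l ∈ s with j ≤ l, d l :=
      fun j hj => by rw [filter_insert, if_neg (ha j hj).not_ge]
    have htotal : ∑ l ∈ insert a s with a ≤ l, d l = d a + ∑ l ∈ s, d l := by
      rw [filter_true_of_mem fun l hl => ?_, sum_insert has]
      rcases mem_insert.1 hl with rfl | hl
      exacts [le_rfl, (ha l hl).le]
    have hrest : 0 ≤ ∑ l ∈ s, d l * (g l - g a) := by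
      refine ih (fun l => g l - g a) (fun j hj => ?_) ?_ ?_
      · simpa [htail j hj] using hd j (mem_insert_of_mem hj)
      · exact fun x hx y hy hxy => sub_le_sub_right
          (hg (mem_insert_of_mem hx) (mem_insert_of_mem hy) hxy) _
      · exact fun x hx => sub_nonneg.2
          (hg (mem_insert_self a s) (mem_insert_of_mem hx) (ha x hx).le)
    have hfirst : 0 ≤ g a * (d a + ∑ l ∈ s, d l) :=
      mul_nonneg (hg₀ a (mem_insert_self a s)) (htotal ▸ hd a (mem_insert_self a s))
    calc 0 ≤ g a * (d a + ∑ l ∈ s, d l) + ∑ l ∈ s, d l * (g l - g a) := add_nonneg hfirst hrest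
      _ = ∑ l ∈ insert a s, d l * g l := by
        simp only [sum_insert has, mul_sub, sum_sub_distrib, ← sum_mul]
        ring

theorem stDom.sum_mul_le_sum_mul {m : ℕ} {μ ν g : Fin m → ℝ} (hμν : stDom μ ν)
    (hsum : ∑ j, μ j = ∑ j, ν j) (hg : Monotone g) :
    ∑ j, μ j * g j ≤ ∑ j, ν j * g j := by
  rcases m with _ | m
  · simp
  have key := Finset.univ.sum_mul_nonneg_of_tail_sum_nonneg (fun j => ν j - μ j)
    (fun j => g j - g 0) (fun j _ => by simpa [sum_sub_distrib] using hμν j)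
    (fun _ _ _ _ hxy => sub_le_sub_right (hg hxy) _)
    (fun x _ => sub_nonneg.2 (hg (Fin.zero_le x)))
  simp only [sub_mul, mul_sub, sum_sub_distrib, ← sum_mul, hsum] at key
  linarith

theorem exists_monotone_between {α β : Type*} [Preorder α] [LocallyFiniteOrderTop α]
    [SemilatticeInf β] {f g : α → β} (hfg : ∀ x y, x ≤ y → f x ≤ g y) :
    ∃ h : α → β, Monotone h ∧ f ≤ h ∧ h ≤ g :=
  ⟨fun x => (Ici x).inf' nonempty_Ici g,
    fun _ _ hxy => inf'_mono g (Ici_subset_Ici.2 hxy) nonempty_Ici,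
    fun x => le_inf' _ _ fun y hy => hfg x y (mem_Ici.1 hy),
    fun _ => inf'_le g (mem_Ici.2 le_rfl)⟩

theorem Matrix.sum_mul_apply {ι κ μ R : Type*} [Fintype κ] [NonUnitalNonAssocSemiring R]
    (A : Matrix ι κ R) (B : Matrix κ μ R) (S : Finset μ) (i : ι) :
    ∑ l ∈ S, (A * B) i l = ∑ n, A i n * ∑ l ∈ S, B n l := by
  simp only [mul_apply, mul_sum]
  exact sum_comm

theorem tri_mul_general
    (k : ℕ) (A A' B B' : Matrix (Fin (k + 1)) (Fin (k + 1)) ℝ)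
    (hA : IsStochastic A) (hA' : IsStochastic A')
    (hAA : tri A A') (hBB : tri B B') :
    tri (A * B) (A' * B') := by
  intro i j hij t
  set S := univ.filter (fun l : Fin (k + 1) => t ≤ l)
  obtain ⟨H, hH, hBH, hHB'⟩ := exists_monotone_between
    (f := fun n => ∑ l ∈ S, B n l) (g := fun n => ∑ l ∈ S, B' n l) fun n n' h => hBB n n' h t
  rw [sum_mul_apply, sum_mul_apply]
  calc ∑ n, A i n * ∑ l ∈ S, B n l
      ≤ ∑ n, A i n * H n := sum_le_sum fun n _ => mul_le_mul_of_nonneg_left (hBH n) (hA.1 i n)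
    _ ≤ ∑ n, A' j n * H n := (hAA i j hij).sum_mul_le_sum_mul (by rw [hA.2, hA'.2]) hH
    _ ≤ ∑ n, A' j n * ∑ l ∈ S, B' n l :=
        sum_le_sum fun n _ => mul_le_mul_of_nonneg_left (hHB' n) (hA'.1 j n)

/-- Lemma 2, first part (De Santis–Spizzichino): the relation `⊴` is
preserved under matrix products. -/
theorem tri_mul
    (k : ℕ) (A A' B B' : Matrix (Fin (k + 1)) (Fin (k + 1)) ℝ)
    (hA : IsStochastic A) (hA' : IsStochastic A')
    (hB : IsStochastic B) (hB' : IsStochastic B')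
    (hAA : tri A A') (hBB : tri B B') :
    tri (A * B) (A' * B') :=
  tri_mul_general k A A' B B' hA hA' hAA hBB
end

section
/- Let P and P̃ be stochastic matrices on E_k = {0,...,k} with p_{k,k} = p̃_{k,k} = 1, both chains started at state 0. Assume there exist two coprime positive integers n_1 and n_2 such that P̃^{n_1} ⊴ P^{n_1} and P̃^{n_2} ⊴ P^{n_2}. Then T_k ⪯_{a.st} T̃_k: there exists n_0 ∈ ℕ such that (P̃^n)_{0,k} ≤ (P^n)_{0,k} for all n ≥ n_0. -/
open Finset Matrix

/-!
The set of `n` with `P̃ⁿ ⊴ Pⁿ` is an additive submonoid of `ℕ`. Indeed `⊴` is preserved by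
products of stochastic matrices: if `A' ⊴ A` and `B' ⊴ B`, the tail masses of the rows of `B'`
lie below the monotone function `q ↦ min_{q' ≥ q} (tail mass of row q' of B)`, which lies below
the tail masses of the rows of `B`, and a row of `A'` integrates a monotone function to at most
what a dominating row of `A` does (summation by parts). A submonoid of `ℕ` containing two coprime
numbers contains all large `n`, and reading `P̃ⁿ ⊴ Pⁿ` at row `0` and threshold `k` gives the claim.
-/

theorem sum_mul_eq_add_sum_mul_tail {k : ℕ} (x g : Fin (k + 1) → ℝ) :
    ∑ l, x l * g l = g 0 * ∑ l, x l +
      ∑ i ∈ range k, (∑ l : Fin (k + 1) with i + 1 ≤ l.val, x l) *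
        (g (Fin.clamp (i + 1) k) - g (Fin.clamp i k)) := by
  have telescope : ∀ l : Fin (k + 1),
      g l = g 0 + ∑ i ∈ range l, (g (Fin.clamp (i + 1) k) - g (Fin.clamp i k)) := by
    intro l
    rw [sum_range_sub (fun i => g (Fin.clamp i k))]
    have hl : Fin.clamp l k = l := Fin.ext (by simp [l.is_le])
    have h0 : Fin.clamp 0 k = 0 := Fin.ext (by simp)
    rw [hl, h0]
    ring
  have swap : ∑ l, x l * ∑ i ∈ range l, (g (Fin.clamp (i + 1) k) - g (Fin.clamp i k)) =
      ∑ i ∈ range k, (∑ l : Fin (k + 1) with i + 1 ≤ l.val, x l) *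
        (g (Fin.clamp (i + 1) k) - g (Fin.clamp i k)) := by
    simp_rw [mul_sum, sum_mul]
    refine sum_comm' fun l i => ?_
    simp only [mem_univ, mem_range, mem_filter, true_and]
    omega
  conv_lhs => enter [2, l]; rw [telescope l]
  simp_rw [mul_add, sum_add_distrib, swap, ← sum_mul, mul_comm]

theorem stDom.sum_mul_le_of_monotone {k : ℕ} {μ ν g : Fin (k + 1) → ℝ} (h : stDom μ ν)
    (hsum : ∑ l, μ l = ∑ l, ν l) (hg : Monotone g) :
    ∑ l, μ l * g l ≤ ∑ l, ν l * g l := by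
  rw [sum_mul_eq_add_sum_mul_tail, sum_mul_eq_add_sum_mul_tail, hsum]
  refine add_le_add le_rfl (sum_le_sum fun i hi => ?_)
  rw [mem_range] at hi
  exact mul_le_mul_of_nonneg_right (h ⟨i + 1, by omega⟩)
    (sub_nonneg.2 (hg (by simp [Fin.le_def])))

theorem Matrix.sum_mul_apply_eq_sum_mul_sum {m n p R : Type*} [Fintype n]
    [NonUnitalNonAssocSemiring R]
    (C : Matrix m n R) (D : Matrix n p R) (r : m) (s : Finset p) :
    ∑ l ∈ s, (C * D) r l = ∑ q, C r q * ∑ l ∈ s, D q l := by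
  simp_rw [mul_apply, mul_sum]
  exact sum_comm

theorem IsStochastic.one {m : ℕ} : IsStochastic (1 : Matrix (Fin m) (Fin m) ℝ) :=
  ⟨fun i j => by by_cases h : i = j <;> simp [one_apply, h], fun i => by simp [one_apply]⟩

theorem IsStochastic.mul {m : ℕ} {A B : Matrix (Fin m) (Fin m) ℝ}
    (hA : IsStochastic A) (hB : IsStochastic B) : IsStochastic (A * B) := by
  refine ⟨fun i j => ?_, fun i => ?_⟩
  · rw [mul_apply]
    exact sum_nonneg fun q _ => mul_nonneg (hA.1 i q) (hB.1 q j)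
  · rw [sum_mul_apply_eq_sum_mul_sum]
    simp [hB.2, hA.2]

theorem IsStochastic.pow {m : ℕ} {A : Matrix (Fin m) (Fin m) ℝ}
    (hA : IsStochastic A) (n : ℕ) : IsStochastic (A ^ n) := by
  induction n with
  | zero => simpa using IsStochastic.one
  | succ n ih => simpa [pow_succ] using ih.mul hA

theorem tri_one {m : ℕ} : tri (1 : Matrix (Fin m) (Fin m) ℝ) 1 := by
  intro i j hij t
  simp only [one_apply, sum_ite_eq, mem_filter, mem_univ, true_and]
  split_ifs with hi hj <;> first | exact absurd (hi.trans hij) hj | norm_num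

theorem tri.mul {k : ℕ} {A' A B' B : Matrix (Fin (k + 1)) (Fin (k + 1)) ℝ}
    (hAA : tri A' A) (hBB : tri B' B) (hA' : IsStochastic A') (hA : IsStochastic A) :
    tri (A' * B') (A * B) := by
  intro i j hij t
  rw [sum_mul_apply_eq_sum_mul_sum, sum_mul_apply_eq_sum_mul_sum]
  set F' : Fin (k + 1) → ℝ := fun q => ∑ l ∈ univ.filter (fun l => t ≤ l), B' q l
  set F : Fin (k + 1) → ℝ := fun q => ∑ l ∈ univ.filter (fun l => t ≤ l), B q l
  let g : Fin (k + 1) → ℝ := fun q => (Ici q).inf' nonempty_Ici F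
  calc ∑ q, A' i q * F' q
      ≤ ∑ q, A' i q * g q := sum_le_sum fun q _ => mul_le_mul_of_nonneg_left
        (le_inf' _ _ fun q' hq' => hBB q q' (mem_Ici.1 hq') t) (hA'.1 i q)
    _ ≤ ∑ q, A j q * g q := (hAA i j hij).sum_mul_le_of_monotone (by rw [hA'.2, hA.2])
        fun q q' h => inf'_mono F (Ici_subset_Ici.2 h) _
    _ ≤ ∑ q, A j q * F q := sum_le_sum fun q _ => mul_le_mul_of_nonneg_left
        (inf'_le F (mem_Ici.2 le_rfl)) (hA.1 j q)

theorem tri_pow_of_mem_closure {k : ℕ} {P Pt : Matrix (Fin (k + 1)) (Fin (k + 1)) ℝ}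
    (hP : IsStochastic P) (hPt : IsStochastic Pt) {S : Set ℕ}
    (hS : ∀ n ∈ S, tri (Pt ^ n) (P ^ n)) {n : ℕ} (hn : n ∈ AddSubmonoid.closure S) :
    tri (Pt ^ n) (P ^ n) := by
  induction hn using AddSubmonoid.closure_induction with
  | mem n hn => exact hS n hn
  | zero => simpa using tri_one
  | add a b _ _ ha hb =>
    rw [pow_add, pow_add]
    exact ha.mul hb (hPt.pow a) (hP.pow a)

theorem tri.apply_last_le {k : ℕ} {A' A : Matrix (Fin (k + 1)) (Fin (k + 1)) ℝ}
    (h : tri A' A) {i j : Fin (k + 1)} (hij : i ≤ j) :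
    A' i (Fin.last k) ≤ A j (Fin.last k) := by
  simpa [Fin.last_le_iff, filter_eq'] using h i j hij (Fin.last k)

theorem tail_order_of_coprime_tri_general
    (k : ℕ) (P Pt : Matrix (Fin (k + 1)) (Fin (k + 1)) ℝ)
    (hP : IsStochastic P) (hPt : IsStochastic Pt)
    (n1 n2 : ℕ) (hcop : Nat.Coprime n1 n2)
    (h1 : tri (Pt ^ n1) (P ^ n1)) (h2 : tri (Pt ^ n2) (P ^ n2)) :
    ∃ n0 : ℕ, ∀ n : ℕ, n0 ≤ n →
      (Pt ^ n) 0 (Fin.last k) ≤ (P ^ n) 0 (Fin.last k) := by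
  have hgcd : Nat.setGcd {n1, n2} ∣ 1 := hcop ▸ Nat.dvd_gcd
    (Nat.setGcd_dvd_of_mem (by simp)) (Nat.setGcd_dvd_of_mem (by simp))
  have hgen : ∀ n ∈ ({n1, n2} : Set ℕ), tri (Pt ^ n) (P ^ n) := by
    rintro _ (rfl | rfl)
    exacts [h1, h2]
  obtain ⟨n0, hn0⟩ := Nat.exists_mem_closure_of_ge {n1, n2}
  exact ⟨n0, fun n hn => (tri_pow_of_mem_closure hP hPt hgen
    (hn0 n hn (hgcd.trans (one_dvd n)))).apply_last_le le_rfl⟩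

/-- Proposition 1.a (De Santis–Spizzichino): if `k` is absorbing for both
chains (started at `0`) and `P̃^{n₁} ⊴ P^{n₁}`, `P̃^{n₂} ⊴ P^{n₂}` for two
coprime positive integers, then `T_k ⪯_{a.st} T̃_k`. -/
theorem tail_order_of_coprime_tri
    (k : ℕ) (P Pt : Matrix (Fin (k + 1)) (Fin (k + 1)) ℝ)
    (hP : IsStochastic P) (hPt : IsStochastic Pt)
    (habs : P (Fin.last k) (Fin.last k) = 1) (habst : Pt (Fin.last k) (Fin.last k) = 1)
    (n1 n2 : ℕ) (hn1 : 0 < n1) (hn2 : 0 < n2) (hcop : Nat.Coprime n1 n2)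
    (h1 : tri (Pt ^ n1) (P ^ n1)) (h2 : tri (Pt ^ n2) (P ^ n2)) :
    ∃ n0 : ℕ, ∀ n : ℕ, n0 ≤ n →
      (Pt ^ n) 0 (Fin.last k) ≤ (P ^ n) 0 (Fin.last k) :=
  tail_order_of_coprime_tri_general k P Pt hP hPt n1 n2 hcop h1 h2
end

section
/- Let P̃ and P be stochastic matrices on E_k = {0,...,k} with p̃_{k,k} = p_{k,k} = 1, and let Q̃ and Q be their leading k×k submatrices. Assume that Q̃ is primitive and that μ(P̃) > μ(P), i.e. the spectral radius of Q̃ is strictly larger than the spectral radius of Q (equivalently λ(P̃) < λ(P)). Then there exists n_0 ∈ ℕ such that P̃^n ⊴ P^n for all n ≥ n_0. -/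
open Finset Matrix

/-- The leading `k × k` submatrix of a matrix on `{0, …, k}`. -/
def lead {k : ℕ} (P : Matrix (Fin (k + 1)) (Fin (k + 1)) ℝ) :
    Matrix (Fin k) (Fin k) ℝ :=
  P.submatrix Fin.castSucc Fin.castSucc

/-- The spectral radius of a real matrix: the supremum of the moduli of its
complex eigenvalues. -/
noncomputable def specRad {m : ℕ} (Q : Matrix (Fin m) (Fin m) ℝ) : ℝ :=
  sSup { r : ℝ | ∃ z ∈ spectrum ℂ (Q.map Complex.ofReal), r = ‖z‖ }

/-- `Q` is primitive: some power of `Q` has all entries strictly positive. -/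
def IsPrimitive {m : ℕ} (Q : Matrix (Fin m) (Fin m) ℝ) : Prop :=
  ∃ n : ℕ, 0 < n ∧ ∀ i j, 0 < (Q ^ n) i j

/-!
Write `Q` and `Q̃` for the taboo matrices. By Gelfand's formula `‖Qⁿ‖ ≤ ρⁿ` and `ρ'ⁿ ≤ ‖Q̃ⁿ‖`
eventually, for any `μ(P) < ρ < ρ' < μ(P̃)`, so `‖Qⁿ‖ = o(‖Q̃ⁿ‖)`. Primitivity of `Q̃` makes every
entry of `Q̃ⁿ` comparable to `‖Q̃ⁿ‖`, hence eventually each row sum of `Qⁿ` is below each entry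
of `Q̃ⁿ`. As `k` is absorbing, this says that from any state `Pⁿ` puts less mass on `{0, …, k-1}`
than `P̃ⁿ` puts on `0` alone, which forces every row of `P̃ⁿ` below every row of `Pⁿ` in the
usual stochastic order.
-/

open Filter Asymptotics Topology

lemma Matrix.mul_self_mul_sum_le_mul_mul_apply {α n : Type*} [Fintype n] [CommSemiring α]
    [PartialOrder α] [IsOrderedRing α] {A B C : Matrix n n α} {δ : α} (hδ : 0 ≤ δ)
    (hA : ∀ i j, δ ≤ A i j) (hB : ∀ i j, 0 ≤ B i j) (hC : ∀ i j, δ ≤ C i j) (a b : n) :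
    δ * δ * ∑ i, ∑ j, B i j ≤ (A * B * C) a b := by
  simp only [mul_apply, sum_mul, mul_sum]
  conv_rhs => rw [sum_comm]
  refine sum_le_sum fun i _ => sum_le_sum fun j _ => ?_
  calc δ * δ * B i j = δ * B i j * δ := by ring
    _ ≤ A a i * B i j * C j b :=
      mul_le_mul (mul_le_mul_of_nonneg_right (hA a i) (hB i j)) (hC j b) hδ
        (mul_nonneg (hδ.trans (hA a i)) (hB i j))

section LinftyOpNorm

-- Any submultiplicative norm would do for Gelfand's formula; the `ℓ∞` operator norm (maximal
-- absolute row sum) is the one that compares directly with entries and row sums.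
attribute [local instance] Matrix.linftyOpNormedAddCommGroup Matrix.linftyOpNormedRing
  Matrix.linftyOpNormedAlgebra

section General

variable {α m n : Type*} [Fintype m] [Fintype n] [NormedAddCommGroup α]

lemma Matrix.sum_norm_apply_le_linfty_opNorm (A : Matrix m n α) (i : m) :
    ∑ j, ‖A i j‖ ≤ ‖A‖ := by
  rw [linfty_opNorm_def]
  simpa using NNReal.coe_le_coe.2 (Finset.le_sup (f := fun i => ∑ j, ‖A i j‖₊) (mem_univ i))

lemma Matrix.linfty_opNorm_le_sum_sum_norm (A : Matrix m n α) :
    ‖A‖ ≤ ∑ i, ∑ j, ‖A i j‖ := by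
  rw [linfty_opNorm_def]
  simpa using NNReal.coe_le_coe.2 (Finset.sup_le fun i _ =>
    Finset.single_le_sum (f := fun i => ∑ j, ‖A i j‖₊) (fun _ _ => zero_le) (mem_univ i))

lemma Matrix.linfty_opNorm_map_ofReal (A : Matrix m n ℝ) :
    ‖A.map Complex.ofReal‖ = ‖A‖ := by
  simp [linfty_opNorm_def]

end General

variable {k : ℕ}

lemma specRad_nonneg (Q : Matrix (Fin k) (Fin k) ℝ) : 0 ≤ specRad Q :=
  Real.sSup_nonneg fun _ ⟨z, _, hr⟩ => hr ▸ norm_nonneg z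

lemma ofReal_specRad (Q : Matrix (Fin k) (Fin k) ℝ) :
    ENNReal.ofReal (specRad Q) = spectralRadius ℂ (Q.map Complex.ofReal) := by
  obtain ⟨C, hC⟩ := (spectrum.isBounded (𝕜 := ℂ) (Q.map Complex.ofReal)).exists_norm_le
  have hle : spectralRadius ℂ (Q.map Complex.ofReal) ≤ ENNReal.ofReal (specRad Q) :=
    iSup₂_le fun z hz => by
      rw [← enorm_eq_nnnorm, ← ofReal_norm]
      exact ENNReal.ofReal_le_ofReal
        (le_csSup ⟨C, fun _ ⟨z, hz, hr⟩ => hr ▸ hC z hz⟩ ⟨z, hz, rfl⟩)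
  refine le_antisymm (ENNReal.ofReal_le_of_le_toReal ?_) hle
  refine Real.sSup_le (fun _ ⟨z, hz, hr⟩ => hr ▸ ?_) ENNReal.toReal_nonneg
  rw [← ENNReal.ofReal_le_iff_le_toReal (ne_top_of_le_ne_top ENNReal.ofReal_ne_top hle),
    ofReal_norm, enorm_eq_nnnorm]
  exact le_iSup₂ (f := fun z (_ : z ∈ spectrum ℂ _) => (‖z‖₊ : ENNReal)) z hz

lemma tendsto_norm_pow_rpow_specRad (Q : Matrix (Fin k) (Fin k) ℝ) :
    Tendsto (fun n : ℕ => ‖Q ^ n‖ ^ (1 / n : ℝ)) atTop (𝓝 (specRad Q)) := by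
  have h := spectrum.pow_norm_pow_one_div_tendsto_nhds_spectralRadius (Q.map Complex.ofReal)
  rw [← ofReal_specRad] at h
  have hpow (n : ℕ) : Q.map Complex.ofReal ^ n = (Q ^ n).map Complex.ofReal :=
    (Matrix.map_pow Q Complex.ofRealHom n).symm
  simpa [Function.comp_def, hpow, linfty_opNorm_map_ofReal, specRad_nonneg,
    ENNReal.toReal_ofReal, Real.rpow_nonneg]
    using (ENNReal.tendsto_toReal ENNReal.ofReal_ne_top).comp h

lemma eventually_norm_pow_lt {Q : Matrix (Fin k) (Fin k) ℝ} {ρ : ℝ} (h : specRad Q < ρ) :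
    ∀ᶠ n in atTop, ‖Q ^ n‖ < ρ ^ n := by
  filter_upwards [(tendsto_norm_pow_rpow_specRad Q).eventually_lt_const h,
    eventually_gt_atTop 0] with n hn hn0
  rwa [one_div, Real.rpow_inv_lt_iff_of_pos (norm_nonneg _) ((specRad_nonneg Q).trans h.le)
    (by positivity), Real.rpow_natCast] at hn

lemma eventually_pow_lt_norm_pow {Q : Matrix (Fin k) (Fin k) ℝ} {ρ : ℝ} (hρ : 0 ≤ ρ)
    (h : ρ < specRad Q) : ∀ᶠ n in atTop, ρ ^ n < ‖Q ^ n‖ := by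
  filter_upwards [(tendsto_norm_pow_rpow_specRad Q).eventually_const_lt h,
    eventually_gt_atTop 0] with n hn hn0
  rwa [one_div, Real.lt_rpow_inv_iff_of_pos hρ (norm_nonneg _) (by positivity),
    Real.rpow_natCast] at hn

lemma isLittleO_norm_pow_of_specRad_lt {Q Q' : Matrix (Fin k) (Fin k) ℝ}
    (h : specRad Q < specRad Q') :
    (fun n => ‖Q ^ n‖) =o[atTop] (fun n => ‖Q' ^ n‖) := by
  obtain ⟨ρ, hQρ, hρ⟩ := exists_between h
  obtain ⟨ρ', hρρ', hρ'⟩ := exists_between hρ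
  have hρ0 : 0 ≤ ρ := (specRad_nonneg Q).trans hQρ.le
  have hQ : (fun n => ‖Q ^ n‖) =O[atTop] (fun n => ρ ^ n) :=
    .of_bound' <| (eventually_norm_pow_lt hQρ).mono fun n hn => by
      simpa [abs_of_nonneg hρ0] using hn.le
  have hQ' : (fun n => ρ' ^ n) =O[atTop] (fun n => ‖Q' ^ n‖) :=
    .of_bound' <| (eventually_pow_lt_norm_pow (hρ0.trans hρρ'.le) hρ').mono fun n hn => by
      simpa [abs_of_nonneg (hρ0.trans hρρ'.le)] using hn.le
  exact hQ.trans_isLittleO ((isLittleO_pow_pow_of_lt_left hρ0 hρρ').trans_isBigO hQ')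

lemma IsPrimitive.isBigO_norm_pow_apply {Q : Matrix (Fin k) (Fin k) ℝ} (hQ : ∀ i j, 0 ≤ Q i j)
    (hprim : _root_.IsPrimitive Q) (a b : Fin k) :
    (fun n => ‖Q ^ n‖) =O[atTop] (fun n => (Q ^ n) a b) := by
  obtain ⟨p, -, hpos⟩ := hprim
  obtain ⟨δ, hδle, hδ⟩ : ∃ δ, (∀ i j, δ ≤ (Q ^ p) i j) ∧ 0 < δ := by
    have hle : ∀ᶠ δ in 𝓝[>] (0 : ℝ), ∀ i j, δ ≤ (Q ^ p) i j := by
      simp only [eventually_all]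
      exact fun i j => nhdsWithin_le_nhds (eventually_le_nhds (hpos i j))
    exact (hle.and self_mem_nhdsWithin).exists
  refine .of_bound (‖Q ^ (p + p)‖ / (δ * δ)) ?_
  filter_upwards [eventually_ge_atTop (p + p)] with n hn
  obtain ⟨t, rfl⟩ := Nat.exists_eq_add_of_le hn
  -- `Q ^ (p + t + p) = Q ^ p * Q ^ t * Q ^ p` and `Q ^ p ≥ δ` entrywise
  have hentry := mul_self_mul_sum_le_mul_mul_apply hδ.le hδle (pow_apply_nonneg hQ t) hδle a b
  rw [← pow_add, ← pow_add, add_right_comm] at hentry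
  have hsum : ‖Q ^ t‖ ≤ ∑ i, ∑ j, (Q ^ t) i j := by
    simpa only [Real.norm_of_nonneg (pow_apply_nonneg hQ t _ _)]
      using linfty_opNorm_le_sum_sum_norm (Q ^ t)
  rw [norm_norm, Real.norm_of_nonneg (pow_apply_nonneg hQ _ a b), div_mul_eq_mul_div,
    le_div_iff₀ (by positivity)]
  calc ‖Q ^ (p + p + t)‖ * (δ * δ) ≤ ‖Q ^ (p + p)‖ * ‖Q ^ t‖ * (δ * δ) := by
        rw [pow_add]; gcongr; exact norm_mul_le _ _
    _ ≤ ‖Q ^ (p + p)‖ * (Q ^ (p + p + t)) a b := by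
        rw [mul_assoc]; gcongr; linarith [mul_le_mul_of_nonneg_right hsum (mul_self_nonneg δ)]

lemma eventually_sum_pow_apply_le_pow_apply {Q Q' : Matrix (Fin k) (Fin k) ℝ}
    (hQ : ∀ i j, 0 ≤ Q i j) (hQ' : ∀ i j, 0 ≤ Q' i j) (hprim : _root_.IsPrimitive Q')
    (h : specRad Q < specRad Q') :
    ∀ᶠ n in atTop, ∀ i a b, ∑ j, (Q ^ n) i j ≤ (Q' ^ n) a b := by
  simp only [eventually_all]
  intro i a b
  filter_upwards [((isLittleO_norm_pow_of_specRad_lt h).trans_isBigO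
    (hprim.isBigO_norm_pow_apply hQ' a b)).bound one_pos] with n hn
  calc ∑ j, (Q ^ n) i j = ∑ j, ‖(Q ^ n) i j‖ := by
        simp only [Real.norm_of_nonneg (pow_apply_nonneg hQ n i _)]
    _ ≤ ‖Q ^ n‖ := sum_norm_apply_le_linfty_opNorm _ i
    _ ≤ (Q' ^ n) a b := by
        simpa [Real.norm_of_nonneg (pow_apply_nonneg hQ' n a b)] using hn

end LinftyOpNorm

section AbsorbingState

variable {k : ℕ}

lemma last_apply_castSucc_eq_zero {P : Matrix (Fin (k + 1)) (Fin (k + 1)) ℝ}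
    (hP : P ∈ rowStochastic ℝ (Fin (k + 1))) (habs : P (Fin.last k) (Fin.last k) = 1)
    (j : Fin k) : P (Fin.last k) j.castSucc = 0 := by
  have hsum := sum_row_of_mem_rowStochastic hP (Fin.last k)
  rw [Fin.sum_univ_castSucc, habs, add_eq_right] at hsum
  exact (sum_eq_zero_iff_of_nonneg fun l _ => hP.1 _ _).1 hsum j (mem_univ j)

lemma lead_mul {A B : Matrix (Fin (k + 1)) (Fin (k + 1)) ℝ}
    (hB : ∀ j : Fin k, B (Fin.last k) j.castSucc = 0) :
    lead (A * B) = lead A * lead B := by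
  ext i j
  simp [lead, mul_apply, Fin.sum_univ_castSucc, hB]

lemma lead_pow {P : Matrix (Fin (k + 1)) (Fin (k + 1)) ℝ}
    (hP : ∀ j : Fin k, P (Fin.last k) j.castSucc = 0) (n : ℕ) :
    lead (P ^ n) = lead P ^ n := by
  induction n with
  | zero => ext i j; simp [lead, one_apply]
  | succ n ih => rw [pow_succ, lead_mul hP, ih, pow_succ]

lemma pow_last_apply_castSucc_eq_zero {P : Matrix (Fin (k + 1)) (Fin (k + 1)) ℝ}
    (hP : ∀ j : Fin k, P (Fin.last k) j.castSucc = 0) (n : ℕ) (j : Fin k) :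
    (P ^ n) (Fin.last k) j.castSucc = 0 := by
  induction n with
  | zero => simp [one_apply, (Fin.castSucc_lt_last j).ne']
  | succ n ih => simp [pow_succ', mul_apply, Fin.sum_univ_castSucc, hP, ih]

lemma stDom_of_sum_castSucc_le {μ ν : Fin (k + 1) → ℝ} (hμ : ∀ l, 0 ≤ μ l) (hμ1 : ∑ l, μ l = 1)
    (hν : ∀ l, 0 ≤ ν l) (hν1 : ∑ l, ν l = 1) (h : ∑ l : Fin k, ν l.castSucc ≤ μ 0) :
    stDom μ ν := by
  intro j
  rcases eq_or_ne j 0 with rfl | hj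
  · simp [hμ1, hν1]
  have h0 : (0 : Fin (k + 1)) ∉ univ.filter (j ≤ ·) := by simpa [nonpos_iff_eq_zero] using hj
  have hμtail := sum_le_univ_sum_of_nonneg (s := insert 0 (univ.filter (j ≤ ·))) hμ
  rw [sum_insert h0, hμ1] at hμtail
  calc ∑ l ∈ univ.filter (j ≤ ·), μ l ≤ 1 - μ 0 := by linarith
    _ ≤ 1 - ∑ l : Fin k, ν l.castSucc := by linarith
    _ = ν (Fin.last k) := by rw [← hν1, Fin.sum_univ_castSucc]; ring
    _ ≤ ∑ l ∈ univ.filter (j ≤ ·), ν l :=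
      single_le_sum (fun l _ => hν l) (mem_filter.2 ⟨mem_univ _, Fin.le_last j⟩)

end AbsorbingState

/-- Theorem 7 (De Santis–Spizzichino): if `k` is absorbing for both chains,
the taboo matrix `Q̃` of `P̃` is primitive, and the second eigenvalue moduli
satisfy `μ(P) < μ(P̃)` (i.e. `λ(P̃) < λ(P)`), then `P̃^n ⊴ P^n` for all `n`
large enough. -/
theorem eventual_tri_of_spectral_gap
    (k : ℕ) (P Pt : Matrix (Fin (k + 1)) (Fin (k + 1)) ℝ)
    (hP : IsStochastic P) (hPt : IsStochastic Pt)
    (habs : P (Fin.last k) (Fin.last k) = 1) (habst : Pt (Fin.last k) (Fin.last k) = 1)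
    (hprim : _root_.IsPrimitive (lead Pt))
    (hspec : specRad (lead P) < specRad (lead Pt)) :
    ∃ n0 : ℕ, ∀ n : ℕ, n0 ≤ n → tri (Pt ^ n) (P ^ n) := by
  have hPs := mem_rowStochastic_iff_sum.2 hP
  have hPts := mem_rowStochastic_iff_sum.2 hPt
  have hlast := last_apply_castSucc_eq_zero hPs habs
  have hlastt := last_apply_castSucc_eq_zero hPts habst
  obtain ⟨n₀, hn₀⟩ := eventually_atTop.1 <| eventually_sum_pow_apply_le_pow_apply
    (fun _ _ => hP.1 _ _) (fun _ _ => hPt.1 _ _) hprim hspec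
  refine ⟨n₀, fun n hn i j hij => ?_⟩
  have hPn := pow_mem hPs n
  have hPtn := pow_mem hPts n
  refine stDom_of_sum_castSucc_le (hPtn.1 i) (sum_row_of_mem_rowStochastic hPtn i)
    (hPn.1 j) (sum_row_of_mem_rowStochastic hPn j) ?_
  rcases j.eq_castSucc_or_eq_last with ⟨j, rfl⟩ | rfl
  · obtain ⟨i, rfl⟩ := Fin.exists_castSucc_eq.2 (hij.trans_lt (Fin.castSucc_lt_last j)).ne
    -- `0 : Fin (k + 1)` is the image of `0 : Fin k`
    change ∑ l, lead (P ^ n) j l ≤ lead (Pt ^ n) i ⟨0, i.pos⟩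
    rw [lead_pow hlast, lead_pow hlastt]
    exact hn₀ n hn j i _
  · simpa [pow_last_apply_castSucc_eq_zero hlast] using hPtn.1 i 0
end

section
/- Let A' and A be stochastic matrices on E_k = {0,...,k}. Then A' ⊴ A holds if and only if there exists a stochastically monotone stochastic matrix B on E_k (i.e. b_{i,·} ⪯_st b_{j,·} for all i ≤ j) such that A' ⊴ B and B ⊴ A. -/
open Finset Matrix

/-!
Describe a probability vector on `{0, …, k}` by its tail function `j ↦ ∑_{l ≥ j} μ l`; then
`⪯_st` is pointwise comparison of tail functions. If `A' ⊴ A`, let row `i` of `B` have the tail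
function `j ↦ max_{i' ≤ i} tail(A' i', j)`. This running maximum is nondecreasing in `i`, so `B` is
monotone; it dominates `A' i` at every row `≥ i`, and it is dominated by every row of `A` at index
`≥ i` because each of the tails it maximizes is. The converse is transitivity of `⪯_st` through
the diagonal: `A' i ⪯_st B i ⪯_st A j`.
-/

section TailSum

variable {m : ℕ}

/-- Tail sums indexed by `ℕ`, so that the level `m` just past the last state is available. -/
noncomputable def tailSum (μ : Fin m → ℝ) (j : ℕ) : ℝ :=
  ∑ l ∈ univ.filter (fun l : Fin m => j ≤ l.val), μ l

lemma stDom_iff_tailSum_le {μ ν : Fin m → ℝ} :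
    stDom μ ν ↔ ∀ j : Fin m, tailSum μ j ≤ tailSum ν j := by
  simp only [stDom, tailSum, Fin.le_def]

lemma stDom.trans {μ ν ρ : Fin m → ℝ} (hμν : stDom μ ν) (hνρ : stDom ν ρ) : stDom μ ρ :=
  fun j => (hμν j).trans (hνρ j)

lemma tailSum_zero (μ : Fin m → ℝ) : tailSum μ 0 = ∑ l, μ l := by
  simp [tailSum]

lemma tailSum_eq_zero_of_le (μ : Fin m → ℝ) {j : ℕ} (hj : m ≤ j) : tailSum μ j = 0 :=
  sum_eq_zero fun l hl => absurd (mem_filter.mp hl).2 (by omega)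

lemma tailSum_antitone {μ : Fin m → ℝ} (hμ : ∀ l, 0 ≤ μ l) : Antitone (tailSum μ) :=
  fun _ _ hij => sum_le_sum_of_subset_of_nonneg
    (fun l hl => by simp only [mem_filter, mem_univ, true_and] at hl ⊢; omega) fun l _ _ => hμ l

/-- The vector whose tail function is `F`, provided `F m = 0`. -/
def ofTail (F : ℕ → ℝ) : Fin m → ℝ := fun l => F l - F (l + 1)

lemma tailSum_ofTail {F : ℕ → ℝ} (hF : F m = 0) {j : ℕ} (hj : j ≤ m) :
    tailSum (ofTail (m := m) F) j = F j := by
  have hIco : (range m).filter (j ≤ ·) = Ico j m := by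
    ext l; simp only [mem_filter, mem_range, mem_Ico]; omega
  simp only [tailSum, ofTail]
  rw [sum_filter, Fin.sum_univ_eq_sum_range (fun l => if j ≤ l then F l - F (l + 1) else 0),
    ← sum_filter, hIco]
  simp only [← neg_sub (F (_ + 1)), sum_neg_distrib, sum_Ico_sub F hj, hF, zero_sub, neg_neg]

end TailSum

section Envelope

variable {m : ℕ}

noncomputable def runningMaxTail (A' : Matrix (Fin m) (Fin m) ℝ) (i : Fin m) (j : ℕ) : ℝ :=
  (Iic i).sup' nonempty_Iic fun i' => tailSum (A' i') j

lemma tailSum_le_runningMaxTail (A' : Matrix (Fin m) (Fin m) ℝ) {i' i : Fin m} (h : i' ≤ i)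
    (j : ℕ) : tailSum (A' i') j ≤ runningMaxTail A' i j :=
  le_sup' (fun i' => tailSum (A' i') j) (mem_Iic.mpr h)

lemma runningMaxTail_le_iff (A' : Matrix (Fin m) (Fin m) ℝ) (i : Fin m) (j : ℕ) (c : ℝ) :
    runningMaxTail A' i j ≤ c ↔ ∀ i' ≤ i, tailSum (A' i') j ≤ c := by
  simp [runningMaxTail]

lemma runningMaxTail_mono (A' : Matrix (Fin m) (Fin m) ℝ) (j : ℕ) :
    Monotone fun i => runningMaxTail A' i j :=
  fun _ _ hii' => sup'_mono _ (Iic_subset_Iic.mpr hii') nonempty_Iic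

lemma runningMaxTail_of_le (A' : Matrix (Fin m) (Fin m) ℝ) (i : Fin m) {j : ℕ} (hj : m ≤ j) :
    runningMaxTail A' i j = 0 := by
  simp only [runningMaxTail, tailSum_eq_zero_of_le _ hj, sup'_const]

lemma runningMaxTail_zero {A' : Matrix (Fin m) (Fin m) ℝ} (hA' : IsStochastic A') (i : Fin m) :
    runningMaxTail A' i 0 = 1 := by
  simp only [runningMaxTail, tailSum_zero, hA'.2, sup'_const]

lemma runningMaxTail_antitone {A' : Matrix (Fin m) (Fin m) ℝ} (hA' : IsStochastic A')
    (i : Fin m) : Antitone (runningMaxTail A' i) :=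
  fun _ _ hjj' => (runningMaxTail_le_iff ..).mpr fun _ hi' =>
    (tailSum_antitone (hA'.1 _) hjj').trans (tailSum_le_runningMaxTail A' hi' _)

/-- The stochastically monotone matrix `B` with `A' ⊴ B ⊴ A`. -/
noncomputable def envelope (A' : Matrix (Fin m) (Fin m) ℝ) : Matrix (Fin m) (Fin m) ℝ :=
  fun i => ofTail (runningMaxTail A' i)

lemma tailSum_envelope (A' : Matrix (Fin m) (Fin m) ℝ) (i : Fin m) {j : ℕ} (hj : j ≤ m) :
    tailSum (envelope A' i) j = runningMaxTail A' i j :=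
  tailSum_ofTail (runningMaxTail_of_le A' i le_rfl) hj

lemma stDom_envelope_iff (A' : Matrix (Fin m) (Fin m) ℝ) (i : Fin m) (ν : Fin m → ℝ) :
    stDom (envelope A' i) ν ↔ ∀ j : Fin m, runningMaxTail A' i j ≤ tailSum ν j := by
  simp only [stDom_iff_tailSum_le]
  exact forall_congr' fun j => by rw [tailSum_envelope A' i j.is_lt.le]

lemma stDom_iff_le_envelope (A' : Matrix (Fin m) (Fin m) ℝ) (μ : Fin m → ℝ) (i : Fin m) :
    stDom μ (envelope A' i) ↔ ∀ j : Fin m, tailSum μ j ≤ runningMaxTail A' i j := by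
  simp only [stDom_iff_tailSum_le]
  exact forall_congr' fun j => by rw [tailSum_envelope A' i j.is_lt.le]

lemma isStochastic_envelope {A' : Matrix (Fin m) (Fin m) ℝ} (hA' : IsStochastic A') :
    IsStochastic (envelope A') := by
  refine ⟨fun i l => sub_nonneg.mpr (runningMaxTail_antitone hA' i (Nat.le_succ _)), fun i => ?_⟩
  rw [← tailSum_zero, tailSum_envelope A' i (Nat.zero_le _), runningMaxTail_zero hA']

lemma envelope_monotone (A' : Matrix (Fin m) (Fin m) ℝ) {i i' : Fin m} (h : i ≤ i') :
    stDom (envelope A' i) (envelope A' i') :=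
  (stDom_envelope_iff ..).mpr fun j =>
    (runningMaxTail_mono A' j h).trans_eq (tailSum_envelope A' i' j.is_lt.le).symm

lemma tri_envelope (A' : Matrix (Fin m) (Fin m) ℝ) : tri A' (envelope A') :=
  fun _ _ hij => (stDom_iff_le_envelope ..).mpr fun _ => tailSum_le_runningMaxTail A' hij _

lemma envelope_tri {A' A : Matrix (Fin m) (Fin m) ℝ} (h : tri A' A) : tri (envelope A') A :=
  fun _ _ hij => (stDom_envelope_iff ..).mpr fun j => (runningMaxTail_le_iff ..).mpr
    fun _ hi' => (stDom_iff_tailSum_le.mp (h _ _ (hi'.trans hij))) j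

end Envelope

theorem tri_iff_exists_monotone_between_general
    (k : ℕ) (A' A : Matrix (Fin (k + 1)) (Fin (k + 1)) ℝ)
    (hA' : IsStochastic A') :
    tri A' A ↔
      ∃ B : Matrix (Fin (k + 1)) (Fin (k + 1)) ℝ,
        IsStochastic B ∧ (∀ i j : Fin (k + 1), i ≤ j → stDom (B i) (B j)) ∧
        tri A' B ∧ tri B A := by
  constructor
  · intro h
    exact ⟨envelope A', isStochastic_envelope hA', fun _ _ => envelope_monotone A',
      tri_envelope A', envelope_tri h⟩
  · rintro ⟨B, -, -, hA'B, hBA⟩ i j hij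
    exact (hA'B i i le_rfl).trans (hBA i j hij)

/-- Remark 2, second part (De Santis–Spizzichino): `A' ⊴ A` holds iff there is
a stochastically monotone stochastic matrix `B` with `A' ⊴ B ⊴ A`. -/
theorem tri_iff_exists_monotone_between
    (k : ℕ) (A' A : Matrix (Fin (k + 1)) (Fin (k + 1)) ℝ)
    (hA' : IsStochastic A') (hA : IsStochastic A) :
    tri A' A ↔
      ∃ B : Matrix (Fin (k + 1)) (Fin (k + 1)) ℝ,
        IsStochastic B ∧ (∀ i j : Fin (k + 1), i ≤ j → stDom (B i) (B j)) ∧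
        tri A' B ∧ tri B A :=
  tri_iff_exists_monotone_between_general k A' A hA'
end

section
/- Let A be a finite alphabet with N ≥ 1 letters, let a ∈ A, and let \underline{a} = aa...a ∈ A^k be the constant word of length k. Then for every word w ∈ A^k one has T_w ⪯_st T_{\underline{a}}; equivalently, for every t ∈ ℕ, the number of strings s ∈ A^t containing no occurrence of w is at most the number of strings s ∈ A^t containing no occurrence of \underline{a}. -/
/-!
A string avoiding `w` whose length is at least `k` splits uniquely at its first mismatch with `w`
as `w₀ ⋯ w_{j-1} b r` with `j < k`, `b ≠ w_j`, and a tail `r` that again avoids `w`. For the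
constant word the converse also holds: every such triple assembles into a string `aʲ b r` avoiding
`aᵏ`, because the letter `b ≠ a` cuts every run of `a`'s. Exchanging `w_j` and `a` on the letter `b`
and embedding the shorter tails by strong induction on the length then embeds the `w`-avoiding
strings into the `aᵏ`-avoiding ones.
-/

open Finset

/-- The word `w` (of length `k`) occurs in the string `s` (of length `t`):
some `k` consecutive symbols of `s` equal `w`. -/
def Occurs {A : Type*} {k t : ℕ} (w : Fin k → A) (s : Fin t → A) : Prop :=
  ∃ m : ℕ, ∃ hm : m + k ≤ t, ∀ j : Fin k,
    s ⟨m + (j : ℕ), by have := j.isLt; omega⟩ = w j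

open List Function

theorem occurs_iff_ofFn_infix {A : Type*} {k t : ℕ} (w : Fin k → A) (s : Fin t → A) :
    Occurs w s ↔ ofFn w <:+: ofFn s := by
  constructor
  · rintro ⟨m, hm, hw⟩
    have hwindow : ofFn w = ((ofFn s).drop m).take k := by
      refine ext_getElem (by simp; omega) fun j h₁ _ => ?_
      simp only [List.getElem_ofFn, getElem_take, getElem_drop]
      exact (hw ⟨j, by simpa using h₁⟩).symm
    rw [hwindow]
    exact (take_prefix _ _).isInfix.trans (drop_suffix _ _).isInfix
  · rintro ⟨p, q, h⟩
    have hlen := congrArg length h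
    simp only [length_append, length_ofFn] at hlen
    refine ⟨p.length, by omega, fun j => ?_⟩
    have := getElem_of_eq h (i := p.length + j) (by simp; omega)
    simpa [getElem_append_right, getElem_append_left] using this.symm

section

variable {A : Type*}

abbrev Avoiding (L : List A) (n : ℕ) : Type _ :=
  {l : List A // l.length = n ∧ ¬ L <:+: l}

def avoidingEquivOfFn {k : ℕ} (w : Fin k → A) (t : ℕ) :
    {s : Fin t → A // ¬ Occurs w s} ≃ Avoiding (ofFn w) t :=
  (Equiv.subtypeEquiv (Equiv.vectorEquivFin A t).symm fun s => by
      rw [occurs_iff_ofFn_infix, ← List.Vector.toList_ofFn s]; rfl).trans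
    (Equiv.subtypeSubtypeEquivSubtypeInter _ _)

theorem take_append_cons_inj {L r r' : List A} {j j' : ℕ} {b b' : A}
    (hj : j < L.length) (hj' : j' < L.length) (hb : b ≠ L[j]) (hb' : b' ≠ L[j'])
    (h : L.take j ++ b :: r = L.take j' ++ b' :: r') : j = j' ∧ b = b' ∧ r = r' := by
  induction L generalizing j j' with
  | nil => simp at hj
  | cons c L ih =>
    cases j <;> cases j'
    · simpa using h
    · simp only [take_zero, nil_append, take_succ_cons, cons_append, cons.injEq] at h
      exact absurd h.1 hb
    · simp only [take_zero, nil_append, take_succ_cons, cons_append, cons.injEq] at h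
      exact absurd h.1.symm hb'
    · simp only [take_succ_cons, cons_append, cons.injEq] at h
      simp only [length_cons, add_lt_add_iff_right, getElem_cons_succ] at hj hj' hb hb'
      simpa using ih hj hj' hb hb' h.2

theorem exists_take_append_cons_of_not_prefix {L l : List A} (hL : ¬ L <+: l)
    (hlen : L.length ≤ l.length) :
    ∃ (j : ℕ) (hj : j < L.length) (b : A) (r : List A), b ≠ L[j] ∧ l = L.take j ++ b :: r := by
  induction L generalizing l with
  | nil => exact absurd nil_prefix hL
  | cons c L ih =>
    obtain _ | ⟨b, l⟩ := l
    · simp at hlen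
    by_cases hbc : b = c
    · subst hbc
      obtain ⟨j, hj, b', r, hb', rfl⟩ := ih (by simpa using hL) (by simpa using hlen)
      exact ⟨j + 1, by simpa using hj, b', r, by simpa using hb', by simp⟩
    · exact ⟨0, by simp, b, l, hbc, by simp⟩

theorem not_replicate_prefix_replicate_append_cons {a b : A} {j k : ℕ} {r : List A}
    (hjk : j < k) (hb : b ≠ a) : ¬ replicate k a <+: replicate j a ++ b :: r := by
  obtain ⟨m, rfl⟩ := Nat.exists_eq_add_of_lt hjk
  rw [add_assoc, replicate_add, replicate_succ, prefix_append_right_inj, cons_prefix_cons]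
  exact fun h => hb h.1.symm

theorem not_replicate_infix_replicate_append_cons {a b : A} {j k : ℕ} {r : List A}
    (hjk : j < k) (hb : b ≠ a) (hr : ¬ replicate k a <:+: r) :
    ¬ replicate k a <:+: replicate j a ++ b :: r := by
  have hprefix := not_replicate_prefix_replicate_append_cons (r := r) hjk hb
  induction j with
  | zero =>
    rw [replicate_zero, nil_append, infix_cons_iff]
    exact not_or_intro (by simpa using hprefix) hr
  | succ j ih =>
    rw [replicate_succ, cons_append, infix_cons_iff]
    exact not_or_intro (by simpa [replicate_succ] using hprefix)
      (ih (by omega) (not_replicate_prefix_replicate_append_cons (by omega) hb))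

def subtypeNeEquiv [DecidableEq A] (c d : A) : {b : A // b ≠ c} ≃ {b : A // b ≠ d} :=
  (Equiv.swap c d).subtypeEquiv fun b => by simp [Equiv.swap_apply_eq_iff]

/-- `⟨j, b, r⟩` stands for the string `L.take j ++ b :: r`, whose first mismatch with `L` is at
position `j`. -/
def Mismatch (L : List A) (n : ℕ) : Type _ :=
  Σ j : Fin L.length, {b : A // b ≠ L[j]} × Avoiding L (n - 1 - j)

namespace Mismatch

variable {L : List A} {n : ℕ}

def toList (x : Mismatch L n) : List A :=
  L.take x.1 ++ x.2.1.1 :: x.2.2.1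

theorem toList_injective : Injective (toList : Mismatch L n → List A) := by
  rintro ⟨j, b, r⟩ ⟨j', b', r'⟩ h
  obtain ⟨hj, hb, hr⟩ := take_append_cons_inj j.2 j'.2 b.2 b'.2 h
  obtain rfl : j = j' := Fin.ext hj
  obtain rfl : b = b' := Subtype.ext hb
  obtain rfl : r = r' := Subtype.ext hr
  rfl

theorem length_toList (hn : L.length ≤ n) (x : Mismatch L n) : x.toList.length = n := by
  have := x.1.2
  have := x.2.2.2.1
  simp only [toList, length_append, length_take, length_cons]
  omega

theorem exists_toList_eq (hn : L.length ≤ n) (l : Avoiding L n) :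
    ∃ x : Mismatch L n, x.toList = l.1 := by
  obtain ⟨l, hlen, hl⟩ := l
  obtain ⟨j, hj, b, r, hb, rfl⟩ :=
    exists_take_append_cons_of_not_prefix (fun h => hl h.isInfix) (hlen ▸ hn)
  have hr : ¬ L <:+: r := fun h =>
    hl (h.trans ((suffix_cons b r).trans (suffix_append _ _)).isInfix)
  have hrlen : r.length = n - 1 - j := by simp at hlen; omega
  exact ⟨⟨⟨j, hj⟩, ⟨b, hb⟩, ⟨r, hrlen, hr⟩⟩, rfl⟩

noncomputable def ofAvoiding (hn : L.length ≤ n) : Avoiding L n ↪ Mismatch L n where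
  toFun l := (exists_toList_eq hn l).choose
  inj' l l' h := Subtype.ext <| (exists_toList_eq hn l).choose_spec.symm.trans <|
    (congrArg toList h).trans (exists_toList_eq hn l').choose_spec

def toAvoidingReplicate {a : A} {k : ℕ} (hn : k ≤ n) :
    Mismatch (replicate k a) n ↪ Avoiding (replicate k a) n where
  toFun x := ⟨x.toList, length_toList (by simpa using hn) x, by
    obtain ⟨⟨j, hj⟩, ⟨b, hb⟩, ⟨r, -, hr⟩⟩ := x
    simp only [length_replicate, Fin.getElem_fin, getElem_replicate] at hj hb
    simpa [toList, take_replicate, Nat.min_eq_left hj.le] using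
      not_replicate_infix_replicate_append_cons hj hb hr⟩
  inj' _ _ h := toList_injective (congrArg Subtype.val h)

noncomputable def congr {L' : List A} (hL : L.length = L'.length)
    (e : ∀ j : Fin L.length, Avoiding L (n - 1 - j) ↪ Avoiding L' (n - 1 - j)) :
    Mismatch L n ↪ Mismatch L' n := by
  classical
  exact (finCongr hL).toEmbedding.sigmaMap fun j => (subtypeNeEquiv _ _).toEmbedding.prodMap (e j)

end Mismatch

theorem nonempty_avoiding_embedding_replicate (L : List A) (a : A) (n : ℕ) :
    Nonempty (Avoiding L n ↪ Avoiding (replicate L.length a) n) := by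
  induction n using Nat.strong_induction_on with
  | _ n ih =>
  by_cases hn : L.length ≤ n
  · have e (j : Fin L.length) :
        Avoiding L (n - 1 - j) ↪ Avoiding (replicate L.length a) (n - 1 - j) :=
      (ih _ (by have := j.2; omega)).some
    exact ⟨(Mismatch.ofAvoiding hn).trans
      ((Mismatch.congr (by simp) e).trans (Mismatch.toAvoidingReplicate hn))⟩
  · exact ⟨Subtype.impEmbedding _ _ fun l ⟨hlen, _⟩ =>
      ⟨hlen, fun h => hn (by simpa [hlen] using h.length_le)⟩⟩

end

theorem constant_word_is_st_maximal_general
    (k : ℕ) (A : Type) [Fintype A]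
    (a : A) (w : Fin k → A) :
    ∀ t : ℕ,
      Nat.card {s : Fin t → A // ¬ Occurs w s} ≤
        Nat.card {s : Fin t → A // ¬ Occurs (fun _ : Fin k => a) s} := by
  intro t
  obtain ⟨e⟩ := nonempty_avoiding_embedding_replicate (ofFn w) a t
  rw [length_ofFn, ← ofFn_const] at e
  exact Nat.card_le_card_of_injective _ ((avoidingEquivOfFn w t).toEmbedding.trans
    (e.trans (avoidingEquivOfFn _ t).symm.toEmbedding)).injective

/-- Proposition 2 (De Santis–Spizzichino): the constant word `aa…a` is a
stochastic maximum: `T_w ⪯_st T_{\underline a}` for every word `w` of the same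
length, i.e. for every `t` there are at least as many strings of length `t`
avoiding the constant word as strings avoiding `w`. -/
theorem constant_word_is_st_maximal
    (N k : ℕ) (A : Type) [Fintype A] (hcard : Fintype.card A = N) (hN : 1 ≤ N)
    (a : A) (w : Fin k → A) :
    ∀ t : ℕ,
      Nat.card {s : Fin t → A // ¬ Occurs w s} ≤
        Nat.card {s : Fin t → A // ¬ Occurs (fun _ : Fin k => a) s} :=
  constant_word_is_st_maximal_general k A a w
end

section
/- Let A be a finite alphabet with N letters, let k ≤ N, and let \overline{w} = a_1a_2...a_k ∈ A^k be a word whose k letters are pairwise distinct. Then for every word w ∈ A^k one has T_{\overline{w}} ⪯_st T_w; equivalently, for every t ∈ ℕ, the number of strings s ∈ A^t containing no occurrence of \overline{w} is at most the number of strings s ∈ A^t containing no occurrence of w. -/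
theorem cross_mul_le_of_recurrence {f g : ℕ → ℕ} {c k : ℕ} (hbase : ∀ n ≤ k, f n = g n)
    (hg₀ : 0 < g 0) (hf : ∀ t, f (t + k + 1) + f t ≤ c * f (t + k))
    (hg : ∀ t, c * g (t + k) ≤ g (t + k + 1) + g t) {a n : ℕ} (han : a ≤ n) :
    f n * g a ≤ g n * f a := by
  induction n using Nat.strong_induction_on generalizing a with
  | _ n ih =>
  rcases le_or_gt n k with hnk | hkn
  · rw [hbase n hnk, hbase a (han.trans hnk), mul_comm]
  obtain ⟨t, rfl⟩ : ∃ t, n = t + k + 1 := ⟨n - k - 1, by omega⟩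
  rcases han.eq_or_lt with rfl | hat
  · rw [mul_comm]
  have step : f (t + k + 1) * g (t + k) ≤ g (t + k + 1) * f (t + k) := by
    have := ih (t + k) (by omega) (Nat.le_add_right t k)
    nlinarith [Nat.mul_le_mul_right (g (t + k)) (hf t), Nat.mul_le_mul_right (f (t + k)) (hg t)]
  have prev := ih (t + k) (by omega) (show a ≤ t + k by omega)
  rcases Nat.eq_zero_or_pos (f (t + k)) with hf_zero | hf_pos
  · have : f (t + k + 1) = 0 := by
      have := hf t
      rw [hf_zero, mul_zero] at this
      omega
    simp [this]
  have hg_pos : 0 < g (t + k) := by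
    have := ih (t + k) (by omega) (Nat.zero_le _)
    rw [hbase 0 (Nat.zero_le k)] at this
    exact Nat.pos_of_mul_pos_right ((Nat.mul_pos hf_pos hg₀).trans_le this)
  refine Nat.le_of_mul_le_mul_right ?_ (Nat.mul_pos hf_pos hg_pos)
  calc f (t + k + 1) * g a * (f (t + k) * g (t + k))
      = f (t + k + 1) * g (t + k) * (f (t + k) * g a) := by ring
    _ ≤ g (t + k + 1) * f (t + k) * (g (t + k) * f a) := Nat.mul_le_mul step prev
    _ = g (t + k + 1) * f a * (f (t + k) * g (t + k)) := by ring

theorem le_of_recurrence {f g : ℕ → ℕ} {c k : ℕ} (hbase : ∀ n ≤ k, f n = g n)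
    (hg₀ : 0 < g 0) (hf : ∀ t, f (t + k + 1) + f t ≤ c * f (t + k))
    (hg : ∀ t, c * g (t + k) ≤ g (t + k + 1) + g t) (n : ℕ) : f n ≤ g n := by
  have := cross_mul_le_of_recurrence hbase hg₀ hf hg (Nat.zero_le n)
  rw [hbase 0 (Nat.zero_le k)] at this
  exact Nat.le_of_mul_le_mul_right this hg₀

section Occurrences

variable {A : Type*} {k n t : ℕ}

theorem not_occurs_of_lt (w : Fin k → A) {s : Fin n → A} (h : n < k) : ¬Occurs w s := by
  rintro ⟨m, hm, -⟩
  omega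

theorem Occurs.of_init {w : Fin k → A} {s : Fin (n + 1) → A} (h : Occurs w (Fin.init s)) :
    Occurs w s := by
  obtain ⟨m, hm, hocc⟩ := h
  exact ⟨m, by omega, hocc⟩

theorem Occurs.append {w : Fin k → A} {u : Fin t → A} (h : Occurs w u) (v : Fin n → A) :
    Occurs w (Fin.append u v) := by
  obtain ⟨m, hm, hocc⟩ := h
  exact ⟨m, by omega, fun j => (Fin.append_left u v _).trans (hocc j)⟩

theorem occurs_append_self (u : Fin t → A) (w : Fin k → A) : Occurs w (Fin.append u w) :=
  ⟨t, le_rfl, Fin.append_right u w⟩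

theorem Fin.init_append (u : Fin t → A) (v : Fin (n + 1) → A) :
    Fin.init (Fin.append u v : Fin (t + (n + 1)) → A) = Fin.append u (Fin.init v) := by
  conv_lhs => rw [← Fin.snoc_init_self v, Fin.append_snoc, Fin.init_snoc]

theorem Occurs.eq_append {w : Fin (k + 1) → A} {s : Fin (t + k + 1) → A} (h : Occurs w s)
    (hinit : ¬Occurs w (Fin.init s)) :
    Fin.append (fun i => s (Fin.castAdd (k + 1) i)) w = s := by
  obtain ⟨m, hm, hocc⟩ := h
  obtain rfl : m = t := by
    by_contra
    exact hinit ⟨m, by omega, hocc⟩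
  exact (congrArg _ (funext hocc).symm).trans Fin.append_castAdd_natAdd

end Occurrences

section Counting

variable {A : Type*} {k n : ℕ}

noncomputable def avoidCount (w : Fin k → A) (n : ℕ) : ℕ :=
  Nat.card {s : Fin n → A // ¬Occurs w s}

/-- `N ^ (n + 1) * P(T_w = n + 1)`. -/
noncomputable def firstOccurrenceCount (w : Fin k → A) (n : ℕ) : ℕ :=
  Nat.card {s : Fin (n + 1) → A // ¬Occurs w (Fin.init s) ∧ Occurs w s}

theorem avoidCount_of_lt (w : Fin k → A) (h : n < k) : avoidCount w n = Nat.card (Fin n → A) :=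
  Nat.card_congr (Equiv.subtypeUnivEquiv fun _ => not_occurs_of_lt w h)

theorem card_mul_avoidCount [Finite A] (w : Fin k → A) (n : ℕ) :
    Nat.card A * avoidCount w n = avoidCount w (n + 1) + firstOccurrenceCount w n := by
  classical
  have extend : Nat.card A * avoidCount w n =
      Nat.card {s : Fin (n + 1) → A // ¬Occurs w (Fin.init s)} := by
    rw [mul_comm, avoidCount, ← Nat.card_prod]
    exact Nat.card_congr (((Fin.succFunEquiv A n).subtypeEquiv fun _ => Iff.rfl).trans
      (Equiv.prodSubtypeFstEquivSubtypeProd (p := fun u => ¬Occurs w u))).symm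
  rw [extend, Nat.add_comm (avoidCount w (n + 1)), avoidCount, firstOccurrenceCount]
  refine (Nat.card_congr ((Equiv.sumCompl fun s : {s : Fin (n + 1) → A // ¬Occurs w (Fin.init s)}
    => Occurs w s.1).symm.trans
      (Equiv.sumCongr (Equiv.subtypeSubtypeEquivSubtypeInter _ _) ?_))).trans Nat.card_sum
  exact Equiv.subtypeSubtypeEquivSubtype fun h => mt Occurs.of_init h

theorem firstOccurrenceCount_eq_card_append_init (w : Fin (k + 1) → A) (t : ℕ) :
    firstOccurrenceCount w (t + k) =
      Nat.card {u : Fin t → A // ¬Occurs w (Fin.append u (Fin.init w))} :=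
  Nat.card_congr
    { toFun := fun s => ⟨fun i => s.1 (Fin.castAdd (k + 1) i), by
        rw [← Fin.init_append, s.2.2.eq_append s.2.1]; exact s.2.1⟩
      invFun := fun u => ⟨(Fin.append u.1 w : Fin (t + (k + 1)) → A), by
        rw [Fin.init_append]; exact u.2, occurs_append_self u.1 w⟩
      left_inv := fun s => Subtype.ext (s.2.2.eq_append s.2.1)
      right_inv := fun u => Subtype.ext (funext (Fin.append_left u.1 w)) }

theorem firstOccurrenceCount_le_avoidCount [Finite A] (w : Fin (k + 1) → A) (t : ℕ) :
    firstOccurrenceCount w (t + k) ≤ avoidCount w t := by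
  rw [firstOccurrenceCount_eq_card_append_init]
  exact Nat.card_le_card_of_injective _
    (Subtype.impEmbedding _ _ fun _ => mt (Occurs.append · _)).injective

theorem card_mul_avoidCount_le [Finite A] (w : Fin (k + 1) → A) (t : ℕ) :
    Nat.card A * avoidCount w (t + k) ≤ avoidCount w (t + k + 1) + avoidCount w t := by
  rw [card_mul_avoidCount]
  exact Nat.add_le_add_left (firstOccurrenceCount_le_avoidCount w t) _

end Counting

section Unbordered

variable {A : Type*} {k t : ℕ}

def HasPeriod (w : Fin k → A) (p : ℕ) : Prop :=
  ∀ i j : Fin k, (i : ℕ) + p = j → w i = w j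

/-- Equivalently, no nonempty proper prefix of `w` is also a suffix of `w`. -/
def Unbordered (w : Fin k → A) : Prop :=
  ∀ p, 0 < p → p < k → ¬HasPeriod w p

theorem Function.Injective.unbordered {w : Fin k → A} (hw : Function.Injective w) :
    Unbordered w := fun p hp hpk hper =>
  hp.ne (Fin.mk.inj_iff.mp (hw (hper ⟨0, by omega⟩ ⟨p, hpk⟩ (zero_add p))))

/-- An occurrence straddling the junction would overlap the final copy of `w` with shift
`t - m`, making `t - m` a period of `w`. -/
theorem Unbordered.not_occurs_append_init {w : Fin (k + 1) → A} (hw : Unbordered w)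
    {u : Fin t → A} (hu : ¬Occurs w u) : ¬Occurs w (Fin.append u (Fin.init w)) := by
  rintro ⟨m, hm, hocc⟩
  by_cases hmt : m + (k + 1) ≤ t
  · exact hu ⟨m, hmt, fun j => (Fin.append_left u (Fin.init w) _).symm.trans (hocc j)⟩
  refine hw (t - m) (by omega) (by omega) fun i j hij => ?_
  have hi : (i : ℕ) < k := by omega
  calc w i = Fin.append u (Fin.init w) (Fin.natAdd t ⟨i, hi⟩) :=
        (Fin.append_right u (Fin.init w) ⟨i, hi⟩).symm
    _ = Fin.append u (Fin.init w) ⟨m + j, by omega⟩ := congrArg _ (Fin.ext (by simp; omega))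
    _ = w j := hocc j

theorem Unbordered.firstOccurrenceCount_eq {w : Fin (k + 1) → A} (hw : Unbordered w)
    (t : ℕ) : firstOccurrenceCount w (t + k) = avoidCount w t := by
  rw [firstOccurrenceCount_eq_card_append_init]
  exact Nat.card_congr (Equiv.subtypeEquivRight fun _ =>
    ⟨mt (Occurs.append · _), hw.not_occurs_append_init⟩)

theorem Unbordered.avoidCount_add [Finite A] {w : Fin (k + 1) → A} (hw : Unbordered w)
    (t : ℕ) : avoidCount w (t + k + 1) + avoidCount w t = Nat.card A * avoidCount w (t + k) := by
  rw [card_mul_avoidCount, hw.firstOccurrenceCount_eq]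

theorem Unbordered.avoidCount_le [Finite A] {w' : Fin (k + 1) → A} (hw' : Unbordered w')
    (w : Fin (k + 1) → A) (n : ℕ) : avoidCount w' n ≤ avoidCount w n := by
  refine le_of_recurrence (fun n hn => ?_) ?_ (fun t => (hw'.avoidCount_add t).le)
    (card_mul_avoidCount_le w) n
  · rw [avoidCount_of_lt w' (Nat.lt_succ_of_le hn), avoidCount_of_lt w (Nat.lt_succ_of_le hn)]
  · rw [avoidCount_of_lt w k.succ_pos]
    exact Nat.card_pos

end Unbordered

theorem distinct_letters_word_is_st_minimal_general
    (k : ℕ) (A : Type) [Fintype A]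
    (wbar : Fin k → A) (hinj : Function.Injective wbar) (w : Fin k → A) :
    ∀ t : ℕ,
      Nat.card {s : Fin t → A // ¬ Occurs wbar s} ≤
        Nat.card {s : Fin t → A // ¬ Occurs w s} := by
  intro t
  cases k with
  | zero =>
    have : IsEmpty {s : Fin t → A // ¬Occurs wbar s} :=
      ⟨fun s => s.2 ⟨0, by omega, fun j => j.elim0⟩⟩
    simp
  | succ k => exact hinj.unbordered.avoidCount_le w t

/-- Proposition 3 (De Santis–Spizzichino): if `k ≤ N`, a word `w̄` with
pairwise distinct letters is a stochastic minimum: `T_{w̄} ⪯_st T_w` for every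
word `w` of the same length, i.e. for every `t` there are at most as many
strings of length `t` avoiding `w̄` as strings avoiding `w`. -/
theorem distinct_letters_word_is_st_minimal
    (N k : ℕ) (A : Type) [Fintype A] (hcard : Fintype.card A = N) (hkN : k ≤ N)
    (wbar : Fin k → A) (hinj : Function.Injective wbar) (w : Fin k → A) :
    ∀ t : ℕ,
      Nat.card {s : Fin t → A // ¬ Occurs wbar s} ≤
        Nat.card {s : Fin t → A // ¬ Occurs w s} :=
  distinct_letters_word_is_st_minimal_general k A wbar hinj w
end

section
/- Let w and w' be two words of length k whose letters all belong to an alphabet A with N letters, and let Â ⊇ A be a larger alphabet with N̂ ≥ N letters. If the rowwise stochastic comparison p'^{(w')}_{i,·} ⪯_st p^{(w)}_{i,·} between the word transition matrices over A holds for every i = 0,...,k-1 (where p^{(w)} = P_A^{(w)} and p'^{(w')} = P_A^{(w')}), then the same rowwise comparison holds for the word transition matrices over Â: (P_Â^{(w')})_{i,·} ⪯_st (P_Â^{(w)})_{i,·} for every i = 0,...,k-1. -/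
/-!
A letter of `Â` outside `A` occurs nowhere in either word, so from every transient state it sends
the chain back to state `0`, while the letters of `A` move it exactly as over `A`. Hence every
transient row over `Â` is the mixture `(N / N̂) • (row over A) + (1 - N / N̂) • δ₀`, with the same
weights and the same `δ₀` for `w` and `w'`, and such a mixture preserves `⪯_st`.
-/

open Finset Matrix

/-- `phiW w i a` is the length of the longest prefix of `w` that is a suffix
of the string `w_0 … w_{i-1} a` (states are `0`-indexed here: the state
`i : Fin k` means that the first `i` letters of `w` have just been matched). -/
noncomputable def phiW {A : Type*} {k : ℕ} (w : Fin k → A) (i : Fin k) (a : A) : ℕ :=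
  sSup { h : ℕ | ∃ _hle1 : h ≤ (i : ℕ) + 1, ∃ _hle2 : h ≤ k,
    ∀ j : ℕ, ∀ _hj : j < h,
      w ⟨j, by omega⟩ =
        if _ht : (i : ℕ) + 1 - h + j < (i : ℕ) then
          w ⟨(i : ℕ) + 1 - h + j, by have := i.isLt; omega⟩
        else a }

/-- The transition matrix on `E_k = {0, …, k}` of the Markov chain associated
to the word `w` over the alphabet `A`, tracking the longest prefix of `w`
that is a suffix of the letters drawn so far; state `k` is absorbing. -/
noncomputable def wordMatrix (A : Type*) [Fintype A] {k : ℕ} (w : Fin k → A) :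
    Matrix (Fin (k + 1)) (Fin (k + 1)) ℝ :=
  fun i j =>
    if hi : (i : ℕ) < k then
      (Nat.card {a : A // phiW w ⟨(i : ℕ), hi⟩ a = (j : ℕ)} : ℝ) / (Fintype.card A : ℝ)
    else if j = i then 1 else 0

lemma stDom.smul_add {m : ℕ} {μ ν : Fin m → ℝ} (h : stDom μ ν) {c : ℝ} (hc : 0 ≤ c)
    (ρ : Fin m → ℝ) : stDom (c • μ + ρ) (c • ν + ρ) := by
  intro j
  simp only [Pi.add_apply, Pi.smul_apply, smul_eq_mul, sum_add_distrib, ← mul_sum]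
  gcongr c * ?_ + _
  exact h j

lemma phiW_map {A B : Type*} {k : ℕ} (ι : A ↪ B) (w : Fin k → A) (i : Fin k) (a : A) :
    phiW (fun j => ι (w j)) i (ι a) = phiW w i a := by
  simp only [phiW, ← apply_dite ι, ι.injective.eq_iff]

lemma phiW_eq_zero_of_notMem_range {A : Type*} {k : ℕ} (w : Fin k → A) (i : Fin k) {a : A}
    (ha : a ∉ Set.range w) : phiW w i a = 0 := by
  refine Nat.le_zero.mp (csSup_le ⟨0, by omega, by omega, by omega⟩ ?_)
  rintro h ⟨-, hhk, hpre⟩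
  by_contra hh
  have hlast := hpre (h - 1) (by omega)
  rw [dif_neg (by omega)] at hlast
  exact ha ⟨_, hlast⟩

lemma card_filter_phiW_map {A B : Type*} [Fintype A] [Fintype B] {k : ℕ} (ι : A ↪ B)
    (w : Fin k → A) (i : Fin k) (j : ℕ) :
    #{b | phiW (fun x => ι (w x)) i b = j} =
      #{a | phiW w i a = j} + if j = 0 then Fintype.card B - Fintype.card A else 0 := by
  classical
  set s : Finset B := univ.map ι
  have h_range : #{b ∈ s | phiW (fun x => ι (w x)) i b = j} = #{a | phiW w i a = j} := by
    simp only [s, filter_map, card_map, Function.comp_def, phiW_map]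
  have h_compl : {b ∈ sᶜ | phiW (fun x => ι (w x)) i b = j} = if j = 0 then sᶜ else ∅ := by
    rw [← filter_const]
    refine filter_congr fun b hbs => ?_
    have hb : b ∉ Set.range fun x => ι (w x) := by
      rintro ⟨x, rfl⟩
      simp [s] at hbs
    rw [phiW_eq_zero_of_notMem_range _ _ hb, eq_comm]
  rw [← union_compl s, filter_union,
    card_union_of_disjoint (disjoint_filter_filter disjoint_compl_right), h_range, h_compl, apply_ite card, card_compl, card_map, card_univ, card_empty]

lemma wordMatrix_map_row {A B : Type*} [Fintype A] [Fintype B] {k : ℕ} (ι : A ↪ B)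
    (w : Fin k → A) (i : Fin (k + 1)) (hi : (i : ℕ) < k) :
    wordMatrix B (fun x => ι (w x)) i =
      (Fintype.card A / Fintype.card B : ℝ) • wordMatrix A w i +
        (1 - Fintype.card A / Fintype.card B : ℝ) • Pi.single 0 1 := by
  have : Nonempty A := ⟨w ⟨i, hi⟩⟩
  have hA : (0 : ℝ) < Fintype.card A := mod_cast Fintype.card_pos
  have hAB := Fintype.card_le_of_embedding ι
  have hB : (0 : ℝ) < Fintype.card B := by
    have : (Fintype.card A : ℝ) ≤ Fintype.card B := mod_cast hAB
    linarith
  ext l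
  simp only [wordMatrix, dif_pos hi, Nat.card_eq_fintype_card, Fintype.card_subtype,
    card_filter_phiW_map, Pi.add_apply, Pi.smul_apply, smul_eq_mul, Pi.single_apply]
  rcases eq_or_ne l 0 with rfl | hl
  · simp only [Fin.val_zero, if_true, Nat.cast_add, Nat.cast_sub hAB]
    field_simp
  · simp only [hl, Fin.val_eq_zero_iff, if_false, add_zero, mul_zero]
    field_simp

theorem rowwise_comparison_alphabet_extension_general
    (k : ℕ) (A Ahat : Type) [Fintype A] [Fintype Ahat]
    (ι : A ↪ Ahat) (w w' : Fin k → A)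
    (hyp : ∀ i : Fin (k + 1), (i : ℕ) < k →
      stDom ((wordMatrix A w') i) ((wordMatrix A w) i)) :
    ∀ i : Fin (k + 1), (i : ℕ) < k →
      stDom ((wordMatrix Ahat (fun j => ι (w' j))) i)
        ((wordMatrix Ahat (fun j => ι (w j))) i) := by
  intro i hi
  rw [wordMatrix_map_row ι w' i hi, wordMatrix_map_row ι w i hi]
  exact (hyp i hi).smul_add (by positivity) _

/-- Proposition 4 (De Santis–Spizzichino): if the rowwise stochastic
comparison between the word transition matrices of `w'` and `w` holds over the
alphabet `A`, then it also holds over any larger alphabet `Â ⊇ A`. -/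
theorem rowwise_comparison_alphabet_extension
    (k N Nhat : ℕ) (A Ahat : Type) [Fintype A] [Fintype Ahat]
    (hA : Fintype.card A = N) (hAhat : Fintype.card Ahat = Nhat) (hNN : N ≤ Nhat)
    (ι : A ↪ Ahat) (w w' : Fin k → A)
    (hyp : ∀ i : Fin (k + 1), (i : ℕ) < k →
      stDom ((wordMatrix A w') i) ((wordMatrix A w) i)) :
    ∀ i : Fin (k + 1), (i : ℕ) < k →
      stDom ((wordMatrix Ahat (fun j => ι (w' j))) i)
        ((wordMatrix Ahat (fun j => ι (w j))) i) :=
  rowwise_comparison_alphabet_extension_general k A Ahat ι w w' hyp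
end
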